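/- arXiv:1205.3076 — 9 statements merged into one kernel-verified Lean document; each statement's English description precedes it below -/
import Mathlib

section
/- In the GYNI game with N players, each deterministic local strategy (a family of functions a_i : {0,1} → {0,1}) can win on at most two input strings, and these two strings are bitwise complements of each other. Consequently, the maximal classical winning probability equals max over input strings x of q(x) + q(x̄), where x̄ is the bitwise complement of x. -/
/-!
If two inputs on which the same strategy wins agree at player `i`, they also agree at
player `i + 1`, since `a i` computes `x (i + 1)` from `x i`. Going around the ring, two such
inputs agree everywhere as soon as they agree somewhere, and otherwise they are complements.
So a strategy wins at most on some `{y, ȳ}`, and the strategy `a i b = b ^^ y i ^^ y (i + 1)`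
wins exactly on `{y, ȳ}`.
-/

open Finset

open Fin.NatCast in
theorem Fin.forall_of_add_one_closed {N : ℕ} [NeZero N] {P : Fin N → Prop} {j : Fin N}
    (hj : P j) (hclosed : ∀ i, P i → P (i + 1)) (i : Fin N) : P i := by
  have hreach : ∀ k : ℕ, P (j + (k : Fin N)) := by
    intro k
    induction k with
    | zero => simpa using hj
    | succ k ih => simpa [add_assoc] using hclosed _ ih
  simpa [add_comm j] using hreach (i - j).val

namespace Gyni

variable {N : ℕ} [NeZero N]

def Wins (a : Fin N → Bool → Bool) (x : Fin N → Bool) : Prop :=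
  ∀ i, a i (x i) = x (i + 1)

instance (a : Fin N → Bool → Bool) : DecidablePred (Wins a) :=
  fun _ => inferInstanceAs (Decidable (∀ _, _))

theorem Wins.eq_or_eq_not {a : Fin N → Bool → Bool} {y z : Fin N → Bool}
    (hy : Wins a y) (hz : Wins a z) : z = y ∨ z = fun i => !y i := by
  by_cases hagree : ∃ j, z j = y j
  · obtain ⟨j, hj⟩ := hagree
    left
    funext i
    exact Fin.forall_of_add_one_closed (P := fun i => z i = y i) hj
      (fun i h => by rw [← hz i, h, hy i]) i
  · right
    funext i
    exact Bool.eq_not_of_ne fun h => hagree ⟨i, h⟩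

theorem ne_not_self (y : Fin N → Bool) : y ≠ fun i => !y i :=
  fun h => by simpa using congrFun h 0

theorem filter_wins_subset {a : Fin N → Bool → Bool} {y : Fin N → Bool} (hy : Wins a y) :
    univ.filter (Wins a) ⊆ {y, fun i => !y i} := by
  intro z hz
  rcases (mem_filter.mp hz).2.eq_or_eq_not hy with rfl | rfl <;> simp

def pairStrategy (y : Fin N → Bool) (i : Fin N) (b : Bool) : Bool :=
  b ^^ y i ^^ y (i + 1)

theorem filter_wins_pairStrategy (y : Fin N → Bool) :
    univ.filter (Wins (pairStrategy y)) = {y, fun i => !y i} := by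
  have hwins : Wins (pairStrategy y) y := fun i => by simp [pairStrategy]
  refine (filter_wins_subset hwins).antisymm fun z hz => mem_filter.mpr ⟨mem_univ z, ?_⟩
  rcases mem_insert.mp hz with rfl | hz
  · exact hwins
  · rw [mem_singleton.mp hz]
    intro i
    simp [pairStrategy]

variable (q : (Fin N → Bool) → ℝ)

def winProb (a : Fin N → Bool → Bool) : ℝ :=
  ∑ x, if Wins a x then q x else 0

theorem winProb_eq_sum_filter (a : Fin N → Bool → Bool) :
    winProb q a = ∑ x ∈ univ.filter (Wins a), q x :=
  (sum_filter _ _).symm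

theorem exists_winProb_le {q} (hq : ∀ x, 0 ≤ q x) (a : Fin N → Bool → Bool) :
    ∃ y, winProb q a ≤ q y + q fun i => !y i := by
  by_cases hwin : ∃ y, Wins a y
  · obtain ⟨y, hy⟩ := hwin
    refine ⟨y, ?_⟩
    rw [winProb_eq_sum_filter, ← sum_pair (ne_not_self y)]
    exact sum_le_sum_of_subset_of_nonneg (filter_wins_subset hy) fun x _ _ => hq x
  · push Not at hwin
    refine ⟨0, ?_⟩
    rw [winProb, sum_eq_zero fun x _ => if_neg (hwin x)]
    exact add_nonneg (hq _) (hq _)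

theorem winProb_pairStrategy (y : Fin N → Bool) :
    winProb q (pairStrategy y) = q y + q fun i => !y i := by
  rw [winProb_eq_sum_filter, filter_wins_pairStrategy, sum_pair (ne_not_self y)]

end Gyni

/-- The GYNI game with `N` players on a ring: player `i` receives input bit `x i`
and outputs `a i (x i)`; the players win iff `a i (x i) = x (i+1)` for all `i`
(indices mod `N`).  Every deterministic local strategy wins on at most two input
strings, which are bitwise complements of each other, and consequently the
maximal classical winning probability equals `max_x (q x + q x̄)`. -/
theorem gyni_classical_bound (N : ℕ) [NeZero N]
    (q : (Fin N → Bool) → ℝ) (hq : ∀ x, 0 ≤ q x) :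
    (∀ a : Fin N → Bool → Bool, ∀ y z : Fin N → Bool,
        (∀ i, a i (y i) = y (i + 1)) → (∀ i, a i (z i) = z (i + 1)) →
        z = y ∨ z = fun i => !y i) ∧
    IsGreatest
      {w : ℝ | ∃ a : Fin N → Bool → Bool,
        w = ∑ x : Fin N → Bool,
          if ∀ i, a i (x i) = x (i + 1) then q x else 0}
      (Finset.univ.sup' Finset.univ_nonempty
        (fun x : Fin N → Bool => q x + q (fun i => !x i))) := by
  let pairProb := fun x : Fin N → Bool => q x + q fun i => !x i
  refine ⟨fun a y z hy hz => Gyni.Wins.eq_or_eq_not hy hz, ?_, ?_⟩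
  · obtain ⟨y, -, hy⟩ := exists_mem_eq_sup' univ_nonempty pairProb
    exact ⟨Gyni.pairStrategy y, hy.trans (Gyni.winProb_pairStrategy q y).symm⟩
  · rintro _ ⟨a, rfl⟩
    obtain ⟨y, hy⟩ := Gyni.exists_winProb_le hq a
    exact hy.trans (le_sup' pairProb (mem_univ y))
end

section
/- For any no-signaling probability distribution P(a_1,...,a_N | x_1,...,x_N) with binary inputs and outputs, the sum over all 2^N input strings x of P(a_1 = x_2, a_2 = x_3, ..., a_N = x_1 | x) is at most 2. -/
set_option linter.unusedSectionVars false

open Finset Function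

/-- A no-signaling box on `N` parties with binary inputs and outputs: for every
party `j`, the marginal over `a j` does not depend on `x j`. -/
def NoSignaling {N : ℕ} (P : (Fin N → Bool) → (Fin N → Bool) → ℝ) : Prop :=
  ∀ (j : Fin N) (x x' : Fin N → Bool), (∀ i, i ≠ j → x i = x' i) →
    ∀ a : Fin N → Bool,
      ∑ b : Bool, P x (Function.update a j b) = ∑ b : Bool, P x' (Function.update a j b)


variable {N : ℕ} [NeZero N]

/-- auxiliary indicator -/
noncomputable def GYNIind (k : ℕ) (x a : Fin N → Bool) : ℝ :=
  if ∀ i : Fin N, (i : ℕ) < k → a i = x (i + 1) then 1 else 0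

noncomputable def GYNIG (P : (Fin N → Bool) → (Fin N → Bool) → ℝ) (k : ℕ)
    (x : Fin N → Bool) : ℝ :=
  ∑ a : Fin N → Bool, GYNIind k x a * P x a

lemma gyni_val_succ {i : Fin N} (h : (i : ℕ) + 1 < N) :
    ((i + 1 : Fin N) : ℕ) = (i : ℕ) + 1 := by
  have hN : 1 < N := lt_of_le_of_lt (Nat.le_add_left 1 i) h
  simp [Fin.add_def, Fin.val_one', Nat.mod_eq_of_lt hN, Nat.mod_eq_of_lt h]

lemma gyni_update_splitAt (j : Fin N) (b₀ b : Bool) (c : { i // i ≠ j } → Bool) :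
    Function.update ((Equiv.funSplitAt j Bool).symm (b₀, c)) j b
      = (Equiv.funSplitAt j Bool).symm (b, c) := by
  funext i
  by_cases h : i = j
  · subst h; simp
  · simp [Function.update_of_ne h, h]

lemma gyni_sum_split (j : Fin N) (F : (Fin N → Bool) → ℝ) :
    ∑ a : Fin N → Bool, F a
      = ∑ c : { i // i ≠ j } → Bool, ∑ b : Bool,
          F ((Equiv.funSplitAt j Bool).symm (b, c)) := by
  rw [← Equiv.sum_comp (Equiv.funSplitAt j Bool).symm F, Fintype.sum_prod_type,
    Finset.sum_comm]

lemma gyni_sumA {P : (Fin N → Bool) → (Fin N → Bool) → ℝ} (hns : NoSignaling P)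
    (j : Fin N) (x x' : Fin N → Bool) (hxx : ∀ i, i ≠ j → x i = x' i)
    (g : (Fin N → Bool) → ℝ) (hg : ∀ a b, g (Function.update a j b) = g a) :
    ∑ a : Fin N → Bool, g a * P x a = ∑ a : Fin N → Bool, g a * P x' a := by
  rw [gyni_sum_split j, gyni_sum_split j]
  refine Finset.sum_congr rfl fun c _ => ?_
  set a0 : Fin N → Bool := (Equiv.funSplitAt j Bool).symm (false, c) with ha0
  have key : ∀ b : Bool, (Equiv.funSplitAt j Bool).symm (b, c) = Function.update a0 j b := by
    intro b; rw [ha0, gyni_update_splitAt]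
  have hgc : ∀ b : Bool, g ((Equiv.funSplitAt j Bool).symm (b, c)) = g a0 := by
    intro b; rw [key, hg]
  calc ∑ b : Bool, g ((Equiv.funSplitAt j Bool).symm (b, c)) * P x ((Equiv.funSplitAt j Bool).symm (b, c))
      = g a0 * ∑ b : Bool, P x (Function.update a0 j b) := by
        rw [Finset.mul_sum]; exact Finset.sum_congr rfl fun b _ => by rw [hgc, key]
    _ = g a0 * ∑ b : Bool, P x' (Function.update a0 j b) := by rw [hns j x x' hxx a0]
    _ = ∑ b : Bool, g ((Equiv.funSplitAt j Bool).symm (b, c)) * P x' ((Equiv.funSplitAt j Bool).symm (b, c)) := by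
        rw [Finset.mul_sum]; exact (Finset.sum_congr rfl fun b _ => by rw [hgc, key]).symm

lemma gyni_sumD (j : Fin N) (F : (Fin N → Bool) → ℝ) :
    ∑ x : Fin N → Bool, ∑ b : Bool, F (Function.update x j b)
      = 2 * ∑ x : Fin N → Bool, F x := by
  rw [gyni_sum_split j (fun x => ∑ b : Bool, F (Function.update x j b)),
    gyni_sum_split j F, Finset.mul_sum]
  refine Finset.sum_congr rfl fun c _ => ?_
  have key : ∀ b₀ b : Bool,
      Function.update ((Equiv.funSplitAt j Bool).symm (b₀, c)) j b
        = (Equiv.funSplitAt j Bool).symm (b, c) := fun b₀ b => gyni_update_splitAt j b₀ b c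
  simp only [key]
  simp [Fintype.sum_bool]
  ring

lemma gyni_G_step {P : (Fin N → Bool) → (Fin N → Bool) → ℝ} (hns : NoSignaling P)
    (k : ℕ) (hk : k + 1 < N) (x : Fin N → Bool) :
    ∑ b : Bool, GYNIG P (k + 1) (Function.update x ⟨k + 1, hk⟩ b) = GYNIG P k x := by
  set j : Fin N := ⟨k + 1, hk⟩ with hj
  set jm : Fin N := ⟨k, Nat.lt_of_succ_lt hk⟩ with hjm
  have hjval : (jm : ℕ) = k := rfl
  have hjval' : (j : ℕ) = k + 1 := rfl
  have hk' : (jm : ℕ) + 1 < N := by omega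
  have hjm1 : jm + 1 = j := Fin.ext (by rw [gyni_val_succ hk'])
  have hne : ∀ i : Fin N, (i : ℕ) < k → (i + 1 : Fin N) ≠ j := by
    intro i hi hcon
    have h1 : ((i + 1 : Fin N) : ℕ) = (i : ℕ) + 1 := gyni_val_succ (by omega)
    rw [hcon, hjval'] at h1
    omega
  have hQ : ∀ (b : Bool) (a : Fin N → Bool),
      (∀ i : Fin N, (i : ℕ) < k + 1 → a i = Function.update x j b (i + 1))
        ↔ ((∀ i : Fin N, (i : ℕ) < k → a i = x (i + 1)) ∧ a jm = b) := by
    intro b a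
    constructor
    · intro h
      refine ⟨fun i hi => ?_, ?_⟩
      · rw [h i (by omega), Function.update_of_ne (hne i hi)]
      · rw [h jm (by omega), hjm1, Function.update_self]
    · rintro ⟨h2, hb⟩ i hi
      rcases Nat.lt_or_ge (i : ℕ) k with hik | hik
      · rw [h2 i hik, Function.update_of_ne (hne i hik)]
      · have : i = jm := Fin.ext (by omega)
        rw [this, hjm1, Function.update_self, hb]
  have hstep : ∀ b : Bool, GYNIG P (k + 1) (Function.update x j b)
      = ∑ a : Fin N → Bool,
          (if (∀ i : Fin N, (i : ℕ) < k → a i = x (i + 1)) ∧ a jm = b then (1:ℝ) else 0)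
            * P x a := by
    intro b
    unfold GYNIG
    have h1 : ∀ a : Fin N → Bool, GYNIind (k + 1) (Function.update x j b) a
        = (if (∀ i : Fin N, (i : ℕ) < k → a i = x (i + 1)) ∧ a jm = b then (1:ℝ) else 0) := by
      intro a
      unfold GYNIind
      exact if_congr (hQ b a) rfl rfl
    rw [Finset.sum_congr rfl fun a _ => by rw [h1]]
    refine gyni_sumA hns j (Function.update x j b) x
      (fun i hi => Function.update_of_ne hi b x) _ ?_
    intro a c
    have hinej : ∀ i : Fin N, (i : ℕ) < k → i ≠ j := by
      intro i hi hcon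
      rw [hcon, hjval'] at hi
      omega
    have hQ2 : (∀ i : Fin N, (i : ℕ) < k → Function.update a j c i = x (i + 1))
        ↔ (∀ i : Fin N, (i : ℕ) < k → a i = x (i + 1)) := by
      constructor <;> intro h i hi
      · rw [← h i hi, Function.update_of_ne (hinej i hi)]
      · rw [Function.update_of_ne (hinej i hi), h i hi]
    have hjmnej : jm ≠ j := by
      intro hcon
      have := congrArg Fin.val hcon
      rw [hjval, hjval'] at this
      omega
    have hjma : Function.update a j c jm = a jm := Function.update_of_ne hjmnej c a
    exact if_congr (by rw [hQ2, hjma]) rfl rfl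
  rw [Finset.sum_congr rfl fun b _ => hstep b, Finset.sum_comm]
  unfold GYNIG GYNIind
  refine Finset.sum_congr rfl fun a _ => ?_
  by_cases hQ2 : ∀ i : Fin N, (i : ℕ) < k → a i = x (i + 1) <;>
    cases h : a jm <;> simp [hQ2, h]

lemma gyni_M {P : (Fin N → Bool) → (Fin N → Bool) → ℝ}
    (hnorm : ∀ x, ∑ a : Fin N → Bool, P x a = 1) (hns : NoSignaling P) :
    ∀ k, k < N → ∑ x : Fin N → Bool, GYNIG P k x ≤ 2 ^ (N - k) := by
  intro k
  induction k with
  | zero =>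
    intro _
    have h0 : ∀ x : Fin N → Bool, GYNIG P 0 x = 1 := by
      intro x
      unfold GYNIG GYNIind
      simp [hnorm x]
    rw [Finset.sum_congr rfl fun x _ => h0 x]
    simp [Finset.card_univ]
  | succ k ih =>
    intro hk
    have hSk := ih (Nat.lt_of_succ_lt hk)
    have hdd := gyni_sumD (⟨k + 1, hk⟩ : Fin N) (GYNIG P (k + 1))
    have hrew : ∑ x : Fin N → Bool, ∑ b : Bool,
        GYNIG P (k + 1) (Function.update x ⟨k + 1, hk⟩ b)
          = ∑ x : Fin N → Bool, GYNIG P k x :=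
      Finset.sum_congr rfl fun x _ => gyni_G_step hns k hk x
    have key : 2 * ∑ x : Fin N → Bool, GYNIG P (k + 1) x
        = ∑ x : Fin N → Bool, GYNIG P k x := by rw [← hdd, hrew]
    have hpow : (2 : ℝ) ^ (N - k) = 2 * 2 ^ (N - (k + 1)) := by
      rw [show N - k = (N - (k + 1)) + 1 by omega]
      ring
    rw [hpow] at hSk
    linarith [key ▸ hSk]

/-- For any no-signaling box with binary inputs and outputs, the total GYNI
score `∑_x P(a_i = x_{i+1} | x)` over all `2^N` inputs is at most `2`. -/
theorem ns_gyni_total_score_le_two (N : ℕ) [NeZero N]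
    (P : (Fin N → Bool) → (Fin N → Bool) → ℝ)
    (hpos : ∀ x a, 0 ≤ P x a)
    (hnorm : ∀ x, ∑ a : Fin N → Bool, P x a = 1)
    (hns : NoSignaling P) :
    ∑ x : Fin N → Bool, P x (fun i => x (i + 1)) ≤ 2 := by
  have hN : 1 ≤ N := Nat.one_le_iff_ne_zero.mpr (NeZero.ne N)
  have hle : ∀ x : Fin N → Bool, P x (fun i => x (i + 1)) ≤ GYNIG P (N - 1) x := by
    intro x
    have hind : GYNIind (N - 1) x (fun i => x (i + 1)) = 1 := if_pos (fun i _ => rfl)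
    calc P x (fun i => x (i + 1))
        = GYNIind (N - 1) x (fun i => x (i + 1)) * P x (fun i => x (i + 1)) := by
          rw [hind, one_mul]
      _ ≤ ∑ a : Fin N → Bool, GYNIind (N - 1) x a * P x a :=
          Finset.single_le_sum
            (fun a _ => mul_nonneg (by unfold GYNIind; split <;> norm_num) (hpos x a))
            (Finset.mem_univ _)
  calc ∑ x : Fin N → Bool, P x (fun i => x (i + 1))
      ≤ ∑ x : Fin N → Bool, GYNIG P (N - 1) x := Finset.sum_le_sum fun x _ => hle x
    _ ≤ 2 ^ (N - (N - 1)) := gyni_M hnorm hns (N - 1) (by omega)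
    _ = 2 := by rw [show N - (N - 1) = 1 by omega]; norm_num
end

section
/- For the GYNI game with uniformly distributed inputs q(x) = 2^{-N}, no-signaling correlations give no advantage: the maximal no-signaling winning probability equals the classical value 2·2^{-N} = ω_c. -/
/-!
Let `guessProb P σ S x` be the probability that every party `i ∈ S` outputs the input of party
`σ i = i + 1`. If party `i + 1` is not yet constrained, no-signaling at `i + 1` shows that, after
adding the constraint on party `i`, the masses at `x` and at `x` with bit `i + 1` flipped add up
to the old mass at `x`; so the total mass `∑ x, guessProb P σ S x` halves. Constraining parties
`0, …, N - 2` one at a time leaves total mass `2 ^ N / 2 ^ (N - 1) = 2`, which bounds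
`∑ x, P x (x ∘ σ)`.
The box in which every party outputs its own input wins exactly on the two constant inputs.
-/

open Finset Function

section BooleanCube

variable {ι M : Type*} [Fintype ι] [DecidableEq ι] [AddCommMonoid M]

theorem sum_update_not (f : (ι → Bool) → M) (j : ι) :
    ∑ a, f (update a j (!a j)) = ∑ a, f a :=
  (Involutive.bijective fun a => by simp).sum_comp f

theorem sum_sum_update (f : (ι → Bool) → M) (j : ι) :
    ∑ a, ∑ b, f (update a j b) = 2 • ∑ a, f a := by
  have hpair : ∀ a, ∑ b, f (update a j b) = f a + f (update a j (!a j)) := by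
    intro a
    have hsplit : ∀ c, ∑ b, f (update a j b) = f (update a j c) + f (update a j (!c)) := by
      intro c
      cases c <;> simp [add_comm]
    rw [hsplit (a j), update_eq_self]
  simp only [hpair, sum_add_distrib, sum_update_not, two_nsmul]

end BooleanCube

section NoSignaling

variable {N : ℕ} {P : (Fin N → Bool) → (Fin N → Bool) → ℝ}

theorem NoSignaling.sum_mul_eq (hns : NoSignaling P) {j : Fin N} {x x' : Fin N → Bool}
    (hxx' : ∀ i, i ≠ j → x i = x' i) (g : (Fin N → Bool) → ℝ)
    (hg : ∀ a b, g (update a j b) = g a) :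
    ∑ a, g a * P x a = ∑ a, g a * P x' a := by
  have hdouble : ∀ y, 2 • ∑ a, g a * P y a = ∑ a, g a * ∑ b, P y (update a j b) := by
    intro y
    simp only [← sum_sum_update _ j, hg, mul_sum]
  have h := hdouble x
  simp only [hns j x x' hxx', ← hdouble x', two_nsmul] at h
  linarith

theorem noSignaling_ite_eq :
    NoSignaling (fun x a : Fin N → Bool => if a = x then (1 : ℝ) else 0) := by
  intro j x x' hxx' a
  have hcount : ∀ y : Fin N → Bool,
      ∑ b, (if update a j b = y then (1 : ℝ) else 0) =
        if ∀ i ≠ j, a i = y i then 1 else 0 := by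
    intro y
    simp only [update_eq_iff, ite_and, sum_ite_eq', mem_univ, if_true]
  simp only [hcount]
  congr 1
  exact propext <| forall₂_congr fun i hi => by rw [hxx' i hi]

end NoSignaling

section Guessing

variable {N : ℕ} (P : (Fin N → Bool) → (Fin N → Bool) → ℝ) (σ : Fin N → Fin N)

def guessProb (S : Finset (Fin N)) (x : Fin N → Bool) : ℝ :=
  ∑ a, if ∀ i ∈ S, a i = x (σ i) then P x a else 0

theorem guessProb_empty (x : Fin N → Bool) : guessProb P σ ∅ x = ∑ a, P x a := by
  simp [guessProb]

variable {P}

theorem apply_comp_le_guessProb (hpos : ∀ x a, 0 ≤ P x a) (S : Finset (Fin N))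
    (x : Fin N → Bool) : P x (fun i => x (σ i)) ≤ guessProb P σ S x := by
  have h := single_le_sum (f := fun a => if ∀ i ∈ S, a i = x (σ i) then P x a else 0)
    (fun a _ => ?_) (mem_univ fun i => x (σ i))
  · simpa only [guessProb, implies_true, if_true] using h
  · split_ifs
    exacts [hpos x a, le_rfl]

variable {σ}

/-- No constraint in `insert i S` involves the output of party `σ i`, so no-signaling at `σ i`
moves the second summand back to input `x`. -/
theorem guessProb_insert_add_update (hns : NoSignaling P) (hσ : Injective σ)
    {S : Finset (Fin N)} {i : Fin N} (hi : i ∉ S) (hσi : σ i ∉ insert i S)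
    (x : Fin N → Bool) :
    guessProb P σ (insert i S) x + guessProb P σ (insert i S) (update x (σ i) (!x (σ i)))
      = guessProb P σ S x := by
  obtain ⟨hσii, hσiS⟩ : σ i ≠ i ∧ σ i ∉ S := by simpa [not_or] using hσi
  have hflip : ∀ a : Fin N → Bool,
      (∀ s ∈ S, a s = update x (σ i) (!x (σ i)) (σ s)) ↔ ∀ s ∈ S, a s = x (σ s) :=
    fun a => forall₂_congr fun s hs => by
      rw [update_of_ne (hσ.ne (ne_of_mem_of_not_mem hs hi))]
  have hmove := hns.sum_mul_eq (x := update x (σ i) (!x (σ i))) (x' := x)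
    (fun k hk => update_of_ne hk _ _)
    (fun a => if a i = !x (σ i) ∧ ∀ s ∈ S, a s = x (σ s) then 1 else 0)
    (fun a b => by
      simp only [update_of_ne hσii.symm]
      congr 2
      exact propext <| forall₂_congr fun s hs => by
        rw [update_of_ne (ne_of_mem_of_not_mem hs hσiS)])
  simp only [boole_mul] at hmove
  simp only [guessProb, forall_mem_insert, hflip, update_self, hmove, ← sum_add_distrib]
  refine sum_congr rfl fun a _ => ?_
  by_cases hC : ∀ s ∈ S, a s = x (σ s) <;> by_cases hai : a i = x (σ i) <;>
    simp [hC, hai, Bool.eq_not]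

theorem sum_guessProb_eq_two_mul (hns : NoSignaling P) (hσ : Injective σ)
    {S : Finset (Fin N)} {i : Fin N} (hi : i ∉ S) (hσi : σ i ∉ insert i S) :
    ∑ x, guessProb P σ S x = 2 * ∑ x, guessProb P σ (insert i S) x := by
  simp only [← guessProb_insert_add_update hns hσ hi hσi, sum_add_distrib,
    sum_update_not (fun x => guessProb P σ (insert i S) x), two_mul]

end Guessing

section Cycle

variable {n : ℕ}

theorem sum_guessProb_mul_two_pow {P : (Fin (n + 1) → Bool) → (Fin (n + 1) → Bool) → ℝ}
    (hnorm : ∀ x, ∑ a, P x a = 1) (hns : NoSignaling P) (S : Finset (Fin (n + 1)))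
    (hS : Fin.last n ∉ S) :
    (∑ x, guessProb P (· + 1) S x) * 2 ^ #S = 2 ^ (n + 1) := by
  induction S using Finset.induction_on_max with
  | empty => simp [guessProb_empty, hnorm]
  | insert i S hlt ih =>
    have hi : i ∉ S := fun h => lt_irrefl i (hlt i h)
    have hlast : i < Fin.last n := Fin.lt_last_iff_ne_last.2 fun h => hS (h ▸ mem_insert_self i S)
    have hsucc : i < i + 1 := by simp [Fin.lt_def, Fin.val_add_one_of_lt hlast]
    have hσi : i + 1 ∉ insert i S := by
      simp only [mem_insert, not_or]
      exact ⟨hsucc.ne', fun h => (hlt _ h).not_gt hsucc⟩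
    rw [← ih fun h => hS (mem_insert_of_mem h),
      sum_guessProb_eq_two_mul hns (add_left_injective 1) hi hσi, card_insert_of_notMem hi]
    ring

theorem shift_eq_self_iff {x : Fin (n + 1) → Bool} :
    (fun i => x (i + 1)) = x ↔ ∃ b, const _ b = x := by
  constructor
  · intro h
    refine ⟨x 0, funext fun i => ?_⟩
    induction i using Fin.induction with
    | zero => rfl
    | succ i ih => rw [← Fin.coeSucc_eq_succ, congrFun h i.castSucc, ← ih]; rfl
  · rintro ⟨b, rfl⟩
    rfl

theorem sum_ite_shift_eq_self :
    ∑ x : Fin (n + 1) → Bool, (if (fun i => x (i + 1)) = x then (1 : ℝ) else 0) = 2 := by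
  have hfix : (univ.filter fun x : Fin (n + 1) → Bool => (fun i => x (i + 1)) = x) =
      univ.image (const (Fin (n + 1))) := by
    ext x
    simp only [mem_filter, mem_univ, true_and, mem_image, shift_eq_self_iff]
  rw [sum_boole, hfix, card_image_of_injective _ const_injective]
  simp

end Cycle

/-- For the GYNI game with uniformly distributed inputs `q x = 2^{-N}`,
no-signaling correlations give no advantage: the maximal no-signaling winning
probability equals the classical value `2 · 2^{-N}`. -/
theorem gyni_uniform_ns_eq_classical (N : ℕ) [NeZero N] :
    IsGreatest
      {w : ℝ | ∃ P : (Fin N → Bool) → (Fin N → Bool) → ℝ,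
        (∀ x a, 0 ≤ P x a) ∧ (∀ x, ∑ a : Fin N → Bool, P x a = 1) ∧
        NoSignaling P ∧
        w = ∑ x : Fin N → Bool, (1 / 2 ^ N : ℝ) * P x (fun i => x (i + 1))}
      (2 * (1 / 2 ^ N : ℝ)) := by
  obtain ⟨n, rfl⟩ := Nat.exists_eq_succ_of_ne_zero (NeZero.ne N)
  constructor
  · refine ⟨fun x a => if a = x then 1 else 0, fun x a => by positivity, fun x => by simp,
      noSignaling_ite_eq, ?_⟩
    rw [← mul_sum, sum_ite_shift_eq_self, mul_comm]
  · rintro w ⟨P, hpos, hnorm, hns, rfl⟩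
    have hmass := sum_guessProb_mul_two_pow hnorm hns _ (notMem_erase (Fin.last n) univ)
    rw [card_erase_of_mem (mem_univ _), card_univ, Fintype.card_fin, Nat.add_sub_cancel,
      pow_succ', mul_left_inj' (by positivity)] at hmass
    calc ∑ x, 1 / 2 ^ (n + 1) * P x (fun i => x (i + 1))
        ≤ ∑ x, 1 / 2 ^ (n + 1) * guessProb P (· + 1) (univ.erase (Fin.last n)) x :=
          sum_le_sum fun x _ => by gcongr; exact apply_comp_le_guessProb _ hpos _ x
      _ = 2 * (1 / 2 ^ (n + 1)) := by rw [← mul_sum, hmass, mul_comm]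
end

section
/- For the 3-player GYNI game with inputs uniformly distributed over {000, 011, 101, 110}, any no-signaling box satisfies P(000|000) + P(110|011) + P(011|101) + P(101|110) ≤ 4/3, hence ω_ns ≤ 1/3. -/
/-- For the 3-player GYNI game with inputs uniformly distributed over
`{000, 011, 101, 110}`, any no-signaling box satisfies
`P(000|000) + P(110|011) + P(011|101) + P(101|110) ≤ 4/3`,
hence the winning probability satisfies `ω_ns ≤ 1/3`. -/
theorem gyni3_ns_bound
    (P : Bool → Bool → Bool → Bool → Bool → Bool → ℝ)
    -- `P x1 x2 x3 a1 a2 a3` is the probability of outputs `(a1,a2,a3)` on inputs `(x1,x2,x3)`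
    (hpos : ∀ x1 x2 x3 a1 a2 a3, 0 ≤ P x1 x2 x3 a1 a2 a3)
    (hnorm : ∀ x1 x2 x3, ∑ a1 : Bool, ∑ a2 : Bool, ∑ a3 : Bool, P x1 x2 x3 a1 a2 a3 = 1)
    (hns1 : ∀ x1 x1' x2 x3 a2 a3,
      ∑ a1 : Bool, P x1 x2 x3 a1 a2 a3 = ∑ a1 : Bool, P x1' x2 x3 a1 a2 a3)
    (hns2 : ∀ x1 x2 x2' x3 a1 a3,
      ∑ a2 : Bool, P x1 x2 x3 a1 a2 a3 = ∑ a2 : Bool, P x1 x2' x3 a1 a2 a3)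
    (hns3 : ∀ x1 x2 x3 x3' a1 a2,
      ∑ a3 : Bool, P x1 x2 x3 a1 a2 a3 = ∑ a3 : Bool, P x1 x2 x3' a1 a2 a3) :
    P false false false false false false + P false true true true true false
      + P true false true false true true + P true true false true false true ≤ 4 / 3 ∧
    (1 / 4 : ℝ) * (P false false false false false false + P false true true true true false
      + P true false true false true true + P true true false true false true) ≤ 1 / 3 := by
  -- Claim A : T1 + T2 + T3 ≤ 1 (at common input 001)
  have hA : P false false false false false false + P false true true true true false
      + P true false true false true true ≤ 1 := by
    have e1 := hns3 false false false true false false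
    have e2 := hns2 false true false true true false
    have e3 := hns1 true false false true true true
    have n := hnorm false false true
    simp only [Fintype.sum_bool] at e1 e2 e3 n
    linarith [hpos false false false false false true, hpos false true true true false false,
      hpos true false true true true true,
      hpos false false true false true false, hpos false false true true false true]
  -- Claim B : T2 + T3 + T4 ≤ 1 (at common input 111)
  have hB : P false true true true true false + P true false true false true true
      + P true true false true false true ≤ 1 := by
    have e1 := hns1 false true true true true false
    have e2 := hns2 true false true true false true
    have e3 := hns3 true true false true true false
    have n := hnorm true true true
    simp only [Fintype.sum_bool] at e1 e2 e3 n
    linarith [hpos false true true false true false, hpos true false true false false true,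
      hpos true true false true false false,
      hpos true true true false false false, hpos true true true true true true]
  -- Claim C : T3 + T4 + T1 ≤ 1 (at common input 100)
  have hC : P true false true false true true + P true true false true false true
      + P false false false false false false ≤ 1 := by
    have e1 := hns3 true false true false false true
    have e2 := hns2 true true false false true true
    have e3 := hns1 false true false false false false
    have n := hnorm true false false
    simp only [Fintype.sum_bool] at e1 e2 e3 n
    linarith [hpos true false true false true false, hpos true true false true true true,
      hpos false false false true false false,
      hpos true false false false false true, hpos true false false true true false]
  -- Claim D : T4 + T1 + T2 ≤ 1 (at common input 010)
  have hD : P true true false true false true + P false false false false false false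
      + P false true true true true false ≤ 1 := by
    have e1 := hns1 true false true false false true
    have e2 := hns2 false false true false false false
    have e3 := hns3 false true true false true true
    have n := hnorm false true false
    simp only [Fintype.sum_bool] at e1 e2 e3 n
    linarith [hpos true true false false false true, hpos false false false false true false,
      hpos false true true true true true,
      hpos false true false false true true, hpos false true false true false false]
  constructor <;> linarith
end

section
/- Let Λ be a map from positive operators M with 0 ≤ M ≤ 1 on a finite-dimensional Hilbert space to [0,∞) such that Σ_i Λ(M_i) = 1 for every finite family of positive operators with Σ_i M_i = 1. Then Λ is additive: if M_1, M_2, M_1 + M_2 are all between 0 and 1, then Λ(M_1 + M_2) = Λ(M_1) + Λ(M_2), and Λ extends uniquely to a linear functional on all Hermitian operators. -/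
/-!
Additivity on effects comes from comparing the measurements `{M₁, M₂, 1 - M₁ - M₂}` and
`{M₁ + M₂, 1 - M₁ - M₂}`. Everything else works in an ordered real vector space `V` with an order
unit `e` (here the Hermitian matrices with `e = 1`). A nonnegative `Λ` that is additive on
`[0, e]` is monotone there, so for an effect `a` the map `t ↦ Λ (t • a)` is a monotone additive
function on `[0, 1]`, hence linear. This real homogeneity makes `c * Λ (c⁻¹ • a)` independent of
the choice of `c > 0` with `a ≤ c • e`, which extends `Λ` additively to the positive cone; shifting
by multiples of `e` extends it further to a linear functional on `V`. The extension is unique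
because `[0, e]` spans `V`.
-/

open ComplexOrder
open Set Filter Topology

section OrderUnit

variable {V : Type*} [AddCommGroup V] [PartialOrder V]

structure IsPositiveAdditiveOnIcc (Λ : V → ℝ) (e : V) : Prop where
  map_add : ∀ a b, 0 ≤ a → 0 ≤ b → a + b ≤ e → Λ (a + b) = Λ a + Λ b
  nonneg : ∀ a ∈ Icc 0 e, 0 ≤ Λ a

def IsOrderUnit [Module ℝ V] (e : V) : Prop :=
  ∀ v : V, ∃ c : ℝ, 0 < c ∧ -(c • e) ≤ v ∧ v ≤ c • e

namespace IsPositiveAdditiveOnIcc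

variable {Λ : V → ℝ} {e : V}

theorem map_zero (hΛ : IsPositiveAdditiveOnIcc Λ e) (he : 0 ≤ e) : Λ 0 = 0 := by
  have h := hΛ.map_add 0 0 le_rfl le_rfl (by rwa [add_zero])
  rw [add_zero] at h
  linarith

variable [IsOrderedAddMonoid V]

theorem map_le_map (hΛ : IsPositiveAdditiveOnIcc Λ e) {a b : V} (ha : 0 ≤ a) (hab : a ≤ b)
    (hb : b ≤ e) : Λ a ≤ Λ b := by
  have hba : 0 ≤ b - a := sub_nonneg.2 hab
  have h := hΛ.map_add a (b - a) ha hba (by rwa [add_sub_cancel])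
  rw [add_sub_cancel] at h
  linarith [hΛ.nonneg (b - a) ⟨hba, (sub_le_self b ha).trans hb⟩]

theorem map_nsmul (hΛ : IsPositiveAdditiveOnIcc Λ e) {a : V} (ha : 0 ≤ a) :
    ∀ n : ℕ, n • a ≤ e → Λ (n • a) = n * Λ a
  | 0, he => by simpa using hΛ.map_zero (by simpa using he)
  | n + 1, he => by
    rw [succ_nsmul] at he ⊢
    rw [hΛ.map_add _ _ (nsmul_nonneg ha n) ha he,
      hΛ.map_nsmul ha n ((le_add_of_nonneg_right ha).trans he)]
    push_cast
    ring

section Real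

variable {f : ℝ → ℝ}

theorem mul_le_apply (hf : IsPositiveAdditiveOnIcc f 1) {t : ℝ} (ht : t ∈ Icc 0 1) :
    t * f 1 ≤ f t := by
  have hf1 : 0 ≤ f 1 := hf.nonneg 1 ⟨zero_le_one, le_rfl⟩
  -- compare `t` with the largest multiple of `1 / (m + 1)` below it
  have hgrid : ∀ m : ℕ, (t - 1 / (m + 1)) * f 1 ≤ f t := by
    intro m
    have hm : (0 : ℝ) < m + 1 := by positivity
    have hunit : f (1 / (m + 1)) = f 1 / (m + 1) := by
      have h := hf.map_nsmul (a := 1 / ((m : ℝ) + 1)) (by positivity) (m + 1)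
      simp only [nsmul_eq_mul, Nat.cast_succ, mul_one_div_cancel hm.ne', le_rfl,
        forall_const] at h
      rw [h]
      field_simp
    set p := ⌊(m + 1) * t⌋₊
    have hp : (p : ℝ) ≤ (m + 1) * t := Nat.floor_le (by positivity [ht.1])
    have hp' : (m + 1) * t < p + 1 := Nat.lt_floor_add_one _
    have hpt : p • (1 / ((m : ℝ) + 1)) ≤ t := by
      rw [nsmul_eq_mul, mul_one_div, div_le_iff₀ hm]
      linarith
    have hlow : t - 1 / (m + 1) ≤ p / (m + 1) := by
      rw [sub_le_iff_le_add, ← add_div, le_div_iff₀ hm]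
      linarith
    calc (t - 1 / (m + 1)) * f 1 ≤ p / (m + 1) * f 1 := mul_le_mul_of_nonneg_right hlow hf1
      _ = f (p • (1 / ((m : ℝ) + 1))) := by
        rw [hf.map_nsmul (by positivity) p (hpt.trans ht.2), hunit]
        ring
      _ ≤ f t := hf.map_le_map (by positivity) hpt ht.2
  have hlim : Tendsto (fun m : ℕ => (t - 1 / (m + 1)) * f 1) atTop (𝓝 (t * f 1)) := by
    simpa using (tendsto_one_div_add_atTop_nhds_zero_nat.const_sub t).mul_const (f 1)
  exact le_of_tendsto' hlim hgrid

theorem apply_eq_mul (hf : IsPositiveAdditiveOnIcc f 1) {t : ℝ} (ht : t ∈ Icc 0 1) :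
    f t = t * f 1 := by
  have hle := hf.mul_le_apply ht
  have hle' := hf.mul_le_apply ⟨sub_nonneg.2 ht.2, sub_le_self 1 ht.1⟩
  have hsum := hf.map_add t (1 - t) ht.1 (sub_nonneg.2 ht.2) (by rw [add_sub_cancel])
  rw [add_sub_cancel] at hsum
  linarith

end Real

variable [Module ℝ V] [PosSMulMono ℝ V]

theorem comp_smul (hΛ : IsPositiveAdditiveOnIcc Λ e) {a : V} (ha : a ∈ Icc 0 e) :
    IsPositiveAdditiveOnIcc (fun t : ℝ => Λ (t • a)) 1 where
  map_add s t hs ht hst := by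
    simp only [add_smul]
    exact hΛ.map_add _ _ (smul_nonneg hs ha.1) (smul_nonneg ht ha.1)
      (by rw [← add_smul]; exact (smul_le_of_le_one_left ha.1 hst).trans ha.2)
  nonneg t ht := hΛ.nonneg _
    ⟨smul_nonneg ht.1 ha.1, (smul_le_of_le_one_left ha.1 ht.2).trans ha.2⟩

theorem map_smul_of_mem_Icc (hΛ : IsPositiveAdditiveOnIcc Λ e) {a : V} (ha : a ∈ Icc 0 e)
    {t : ℝ} (ht : t ∈ Icc 0 1) : Λ (t • a) = t * Λ a := by
  simpa using (hΛ.comp_smul ha).apply_eq_mul ht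

theorem mul_map_inv_smul_eq (hΛ : IsPositiveAdditiveOnIcc Λ e) {a : V} (ha : 0 ≤ a) {c c' : ℝ}
    (hc : 0 < c) (hc' : 0 < c') (hac : a ≤ c • e) (hac' : a ≤ c' • e) :
    c * Λ (c⁻¹ • a) = c' * Λ (c'⁻¹ • a) := by
  wlog hle : c ≤ c' generalizing c c'
  · exact (this hc' hc hac' hac (le_of_not_ge hle)).symm
  have hscale : c'⁻¹ • a = (c / c') • c⁻¹ • a := by
    rw [smul_smul]
    congr 1
    field_simp
  rw [hscale, hΛ.map_smul_of_mem_Icc ⟨smul_nonneg (inv_nonneg.2 hc.le) ha,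
    (inv_smul_le_iff_of_pos hc).2 hac⟩ ⟨div_nonneg hc.le hc'.le, (div_le_one hc').2 hle⟩]
  field_simp

end IsPositiveAdditiveOnIcc

variable [Module ℝ V] [PosSMulMono ℝ V] {Λ : V → ℝ} {e : V}

theorem IsOrderUnit.nonneg (he : IsOrderUnit e) : 0 ≤ e := by
  obtain ⟨c, hc, -, hce⟩ := he 0
  simpa [inv_smul_smul₀ hc.ne'] using smul_nonneg (inv_nonneg.2 hc.le) hce

variable [IsOrderedAddMonoid V]

theorem IsOrderUnit.span_Icc_eq_top (he : IsOrderUnit e) : Submodule.span ℝ (Icc 0 e) = ⊤ := by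
  refine eq_top_iff.2 fun v _ => ?_
  obtain ⟨c, hc, hlow, hup⟩ := he v
  have h2c : 0 < 2 * c := by positivity
  have hshift : (2 * c)⁻¹ • (v + c • e) ∈ Icc 0 e := by
    rw [neg_le_iff_add_nonneg] at hlow
    refine ⟨smul_nonneg (inv_nonneg.2 h2c.le) hlow, (inv_smul_le_iff_of_pos h2c).2 ?_⟩
    rw [two_mul, add_smul]
    exact add_le_add hup le_rfl
  have hv : v = (2 * c) • (2 * c)⁻¹ • (v + c • e) - c • e := by
    rw [smul_inv_smul₀ h2c.ne', add_sub_cancel_right]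
  rw [hv]
  exact sub_mem (Submodule.smul_mem _ _ (Submodule.subset_span hshift))
    (Submodule.smul_mem _ _ (Submodule.subset_span ⟨he.nonneg, le_rfl⟩))

variable (Λ e) in
noncomputable def coneExtension (a : V) : ℝ :=
  let c := Classical.epsilon fun c : ℝ => 0 < c ∧ a ≤ c • e
  c * Λ (c⁻¹ • a)

variable (Λ e) in
noncomputable def linearExtension (v : V) : ℝ :=
  let c := Classical.epsilon fun c : ℝ => 0 ≤ v + c • e
  coneExtension Λ e (v + c • e) - c * Λ e

namespace IsPositiveAdditiveOnIcc

theorem coneExtension_eq (hΛ : IsPositiveAdditiveOnIcc Λ e) {a : V} (ha : 0 ≤ a) {c : ℝ}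
    (hc : 0 < c) (hac : a ≤ c • e) : coneExtension Λ e a = c * Λ (c⁻¹ • a) := by
  obtain ⟨hc', hac'⟩ :=
    Classical.epsilon_spec (p := fun c : ℝ => 0 < c ∧ a ≤ c • e) ⟨c, hc, hac⟩
  exact hΛ.mul_map_inv_smul_eq ha hc' hc hac' hac

theorem coneExtension_of_mem_Icc (hΛ : IsPositiveAdditiveOnIcc Λ e) {a : V} (ha : a ∈ Icc 0 e) :
    coneExtension Λ e a = Λ a := by
  simpa using hΛ.coneExtension_eq ha.1 one_pos (by rw [one_smul]; exact ha.2)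

theorem coneExtension_add (hΛ : IsPositiveAdditiveOnIcc Λ e) (he : IsOrderUnit e) {a b : V}
    (ha : 0 ≤ a) (hb : 0 ≤ b) :
    coneExtension Λ e (a + b) = coneExtension Λ e a + coneExtension Λ e b := by
  obtain ⟨c, hc, -, hac⟩ := he a
  obtain ⟨c', hc', -, hbc'⟩ := he b
  have hcc : 0 < c + c' := add_pos hc hc'
  have hae : a ≤ (c + c') • e :=
    hac.trans (smul_le_smul_of_nonneg_right (by linarith) he.nonneg)
  have hbe : b ≤ (c + c') • e :=
    hbc'.trans (smul_le_smul_of_nonneg_right (by linarith) he.nonneg)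
  have habe : a + b ≤ (c + c') • e := by
    rw [add_smul]
    exact add_le_add hac hbc'
  rw [hΛ.coneExtension_eq (add_nonneg ha hb) hcc habe, hΛ.coneExtension_eq ha hcc hae,
    hΛ.coneExtension_eq hb hcc hbe, smul_add,
    hΛ.map_add _ _ (smul_nonneg (inv_nonneg.2 hcc.le) ha) (smul_nonneg (inv_nonneg.2 hcc.le) hb)
      (by rw [← smul_add]; exact (inv_smul_le_iff_of_pos hcc).2 habe)]
  ring

theorem coneExtension_smul (hΛ : IsPositiveAdditiveOnIcc Λ e) (he : IsOrderUnit e) {a : V}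
    (ha : 0 ≤ a) {t : ℝ} (ht : 0 ≤ t) : coneExtension Λ e (t • a) = t * coneExtension Λ e a := by
  obtain rfl | ht := ht.eq_or_lt
  · rw [zero_smul, zero_mul, hΛ.coneExtension_of_mem_Icc ⟨le_rfl, he.nonneg⟩,
      hΛ.map_zero he.nonneg]
  obtain ⟨c, hc, -, hac⟩ := he a
  have htac : t • a ≤ (t * c) • e := by
    rw [mul_smul]
    exact smul_le_smul_of_nonneg_left hac ht.le
  rw [hΛ.coneExtension_eq (smul_nonneg ht.le ha) (mul_pos ht hc) htac,
    hΛ.coneExtension_eq ha hc hac, smul_smul, mul_inv_rev, inv_mul_cancel_right₀ ht.ne']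
  ring

theorem linearExtension_eq (hΛ : IsPositiveAdditiveOnIcc Λ e) (he : IsOrderUnit e) {v : V}
    {c : ℝ} (hc : 0 ≤ v + c • e) :
    linearExtension Λ e v = coneExtension Λ e (v + c • e) - c * Λ e := by
  have hshift : ∀ c c' : ℝ, 0 ≤ v + c • e → c ≤ c' →
      coneExtension Λ e (v + c' • e) = coneExtension Λ e (v + c • e) + (c' - c) * Λ e := by
    intro c c' hc hcc'
    have hsplit : v + c' • e = (v + c • e) + (c' - c) • e := by
      rw [sub_smul]
      abel
    rw [hsplit, hΛ.coneExtension_add he hc (smul_nonneg (sub_nonneg.2 hcc') he.nonneg),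
      hΛ.coneExtension_smul he he.nonneg (sub_nonneg.2 hcc'),
      hΛ.coneExtension_of_mem_Icc ⟨he.nonneg, le_rfl⟩]
  have hc₀ := Classical.epsilon_spec (p := fun c : ℝ => 0 ≤ v + c • e) ⟨c, hc⟩
  simp only [linearExtension]
  set c₀ := Classical.epsilon fun c : ℝ => 0 ≤ v + c • e
  rcases le_total c₀ c with h | h
  · rw [hshift c₀ c hc₀ h]
    ring
  · rw [hshift c c₀ hc h]
    ring

theorem linearExtension_of_mem_Icc (hΛ : IsPositiveAdditiveOnIcc Λ e) (he : IsOrderUnit e)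
    {a : V} (ha : a ∈ Icc 0 e) : linearExtension Λ e a = Λ a := by
  rw [hΛ.linearExtension_eq he (c := 0) (by rw [zero_smul, add_zero]; exact ha.1), zero_smul,
    add_zero, zero_mul, sub_zero, hΛ.coneExtension_of_mem_Icc ha]

theorem linearExtension_add (hΛ : IsPositiveAdditiveOnIcc Λ e) (he : IsOrderUnit e) (v w : V) :
    linearExtension Λ e (v + w) = linearExtension Λ e v + linearExtension Λ e w := by
  obtain ⟨c, -, hvc, -⟩ := he v
  obtain ⟨c', -, hwc', -⟩ := he w
  rw [neg_le_iff_add_nonneg] at hvc hwc'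
  have hsplit : v + w + (c + c') • e = (v + c • e) + (w + c' • e) := by
    rw [add_smul]
    abel
  rw [hΛ.linearExtension_eq he (c := c + c') (by rw [hsplit]; exact add_nonneg hvc hwc'),
    hΛ.linearExtension_eq he hvc, hΛ.linearExtension_eq he hwc', hsplit,
    hΛ.coneExtension_add he hvc hwc']
  ring

theorem linearExtension_neg (hΛ : IsPositiveAdditiveOnIcc Λ e) (he : IsOrderUnit e) (v : V) :
    linearExtension Λ e (-v) = -linearExtension Λ e v := by
  have h := hΛ.linearExtension_add he v (-v)
  rw [add_neg_cancel, hΛ.linearExtension_of_mem_Icc he ⟨le_rfl, he.nonneg⟩,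
    hΛ.map_zero he.nonneg] at h
  linarith

theorem linearExtension_smul (hΛ : IsPositiveAdditiveOnIcc Λ e) (he : IsOrderUnit e) (t : ℝ)
    (v : V) : linearExtension Λ e (t • v) = t * linearExtension Λ e v := by
  wlog ht : 0 ≤ t generalizing t v
  · have h := this (-t) (-v) (by linarith)
    rwa [neg_smul_neg, hΛ.linearExtension_neg he, neg_mul_neg] at h
  obtain ⟨c, -, hvc, -⟩ := he v
  rw [neg_le_iff_add_nonneg] at hvc
  have htv : t • v + (t * c) • e = t • (v + c • e) := by rw [smul_add, mul_smul]
  rw [hΛ.linearExtension_eq he (c := t * c) (by rw [htv]; exact smul_nonneg ht hvc),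
    hΛ.linearExtension_eq he hvc, htv, hΛ.coneExtension_smul he hvc ht]
  ring

theorem existsUnique_linearMap (hΛ : IsPositiveAdditiveOnIcc Λ e) (he : IsOrderUnit e) :
    ∃! L : V →ₗ[ℝ] ℝ, ∀ a ∈ Icc 0 e, L a = Λ a := by
  refine ⟨{ toFun := linearExtension Λ e
            map_add' := hΛ.linearExtension_add he
            map_smul' := hΛ.linearExtension_smul he },
    fun a ha => hΛ.linearExtension_of_mem_Icc he ha, fun L hL => ?_⟩
  exact LinearMap.ext_on he.span_Icc_eq_top fun a ha =>
    (hL a ha).trans (hΛ.linearExtension_of_mem_Icc he ha).symm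

end IsPositiveAdditiveOnIcc

end OrderUnit

instance {A : Type*} [AddCommGroup A] [StarAddMonoid A] [PartialOrder A] [Module ℝ A]
    [StarModule ℝ A] [PosSMulMono ℝ A] : PosSMulMono ℝ (selfAdjoint A) where
  smul_le_smul_of_nonneg_left _ hr _ _ hab := smul_le_smul_of_nonneg_left (β := A) hab hr

theorem selfAdjoint.isOrderUnit_one {A : Type*} [CStarAlgebra A] [PartialOrder A]
    [StarOrderedRing A] : IsOrderUnit (1 : selfAdjoint A) := by
  intro a
  have hup : (a : A) ≤ ‖(a : A)‖ • 1 := by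
    simpa [Algebra.algebraMap_eq_smul_one] using a.2.le_algebraMap_norm_self
  have hlow : -(‖(a : A)‖ • 1) ≤ (a : A) := by
    simpa [Algebra.algebraMap_eq_smul_one] using a.2.neg_algebraMap_norm_le_self
  have hle : ‖(a : A)‖ • (1 : A) ≤ (‖(a : A)‖ + 1) • 1 := by
    rw [add_smul, one_smul]
    exact le_add_of_nonneg_right zero_le_one
  refine ⟨‖(a : A)‖ + 1, by positivity, ?_, ?_⟩ <;> rw [← Subtype.coe_le_coe]
  · simpa using (neg_le_neg hle).trans hlow
  · simpa using hup.trans hle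

theorem Matrix.map_add_of_sum_eq_one {n 𝕜 : Type*} [Fintype n] [DecidableEq n] [RCLike 𝕜]
    {Λ : Matrix n n 𝕜 → ℝ}
    (hsum : ∀ (k : ℕ) (M : Fin k → Matrix n n 𝕜),
      (∀ i, (M i).PosSemidef) → ∑ i, M i = 1 → ∑ i, Λ (M i) = 1)
    {M₁ M₂ : Matrix n n 𝕜} (h₁ : M₁.PosSemidef) (h₂ : M₂.PosSemidef)
    (h : (1 - (M₁ + M₂)).PosSemidef) : Λ (M₁ + M₂) = Λ M₁ + Λ M₂ := by
  have hsum₃ := hsum 3 ![M₁, M₂, 1 - (M₁ + M₂)] (by simp [Fin.forall_fin_succ, h₁, h₂, h])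
    (by simp [Fin.sum_univ_three])
  have hsum₂ := hsum 2 ![M₁ + M₂, 1 - (M₁ + M₂)] (by simp [Fin.forall_fin_succ, h₁.add h₂, h])
    (by simp [Fin.sum_univ_two])
  simp only [Fin.sum_univ_three, Fin.sum_univ_two, Matrix.cons_val_zero, Matrix.cons_val_one,
    Matrix.cons_val] at hsum₃ hsum₂
  linarith

open scoped MatrixOrder

theorem selfAdjoint.nonneg_iff_posSemidef {n 𝕜 : Type*} [RCLike 𝕜]
    {A : selfAdjoint (Matrix n n 𝕜)} : 0 ≤ A ↔ (A : Matrix n n 𝕜).PosSemidef := by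
  rw [← Subtype.coe_le_coe, ZeroMemClass.coe_zero, Matrix.nonneg_iff_posSemidef]

/-- A frame function on effects: `Λ` is nonnegative on effects (`0 ≤ M ≤ 1`)
and sums to `1` on every finite measurement (family of positive operators
summing to the identity).  Then `Λ` is additive on effects and extends uniquely
to an `ℝ`-linear functional on the Hermitian (self-adjoint) operators. -/
theorem gleason_frame_function_linear (d : ℕ)
    (Λ : Matrix (Fin d) (Fin d) ℂ → ℝ)
    (hpos : ∀ M : Matrix (Fin d) (Fin d) ℂ,
      M.PosSemidef → (1 - M).PosSemidef → 0 ≤ Λ M)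
    (hsum : ∀ (k : ℕ) (M : Fin k → Matrix (Fin d) (Fin d) ℂ),
      (∀ i, (M i).PosSemidef) → ∑ i, M i = 1 → ∑ i, Λ (M i) = 1) :
    (∀ M₁ M₂ : Matrix (Fin d) (Fin d) ℂ, M₁.PosSemidef → M₂.PosSemidef →
      (1 - (M₁ + M₂)).PosSemidef → Λ (M₁ + M₂) = Λ M₁ + Λ M₂) ∧
    ∃! L : selfAdjoint (Matrix (Fin d) (Fin d) ℂ) →ₗ[ℝ] ℝ,
      ∀ (M : Matrix (Fin d) (Fin d) ℂ) (hM : M.PosSemidef)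
        (hM' : (1 - M).PosSemidef) (hsa : IsSelfAdjoint M),
        L ⟨M, hsa⟩ = Λ M := by
  have hadd : ∀ M₁ M₂ : Matrix (Fin d) (Fin d) ℂ, M₁.PosSemidef → M₂.PosSemidef →
      (1 - (M₁ + M₂)).PosSemidef → Λ (M₁ + M₂) = Λ M₁ + Λ M₂ :=
    fun _ _ => Matrix.map_add_of_sum_eq_one hsum
  have hΛ : IsPositiveAdditiveOnIcc (fun A : selfAdjoint (Matrix (Fin d) (Fin d) ℂ) => Λ A) 1 :=
    ⟨fun a b ha hb hab => hadd a b (selfAdjoint.nonneg_iff_posSemidef.1 ha)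
      (selfAdjoint.nonneg_iff_posSemidef.1 hb) hab,
     fun a ha => hpos a (selfAdjoint.nonneg_iff_posSemidef.1 ha.1) ha.2⟩
  let := Matrix.instCStarAlgebra (n := Fin d)
  refine ⟨hadd, (existsUnique_congr fun L => ?_).1
    (hΛ.existsUnique_linearMap selfAdjoint.isOrderUnit_one)⟩
  exact ⟨fun h M hM hM' hsa => h ⟨M, hsa⟩ ⟨selfAdjoint.nonneg_iff_posSemidef.2 hM, hM'⟩,
    fun h a ha => h a (selfAdjoint.nonneg_iff_posSemidef.1 ha.1) ha.2 a.2⟩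
end

section
/- Any bipartite Gleason correlation is quantum: if W is an entanglement witness (Hermitian, trace one, positive on all product states) on H_A ⊗ H_B, and {M^{x_1}_{a_1}}, {M^{x_2}_{a_2}} are local POVMs, then there exist a quantum state |Ψ⟩ and local POVMs {M^{x_1}_{a_1}}, {M̃^{x_2}_{a_2}} such that tr(W M^{x_1}_{a_1} ⊗ M^{x_2}_{a_2}) = ⟨Ψ| M^{x_1}_{a_1} ⊗ M̃^{x_2}_{a_2} |Ψ⟩ for all inputs and outcomes. -/
/-!
Let `Λ(B) = Tr_B (W (1 ⊗ B))` and `ρ = Λ(1)`, so that `tr (W (A ⊗ B)) = tr (A Λ(B))`. Since `W` is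
positive on product vectors, `Λ` is a positive map, hence `0 ≤ Λ(M) ≤ ρ` for every POVM element
`M`. For `Ψ = ∑ᵢⱼ (√ρ)ᵢⱼ |i⟩ ⊗ |j⟩` one has `⟨Ψ| A ⊗ C |Ψ⟩ = tr (A √ρ Cᵀ √ρ)`, so it suffices to produce a POVM
`M̃` with `√ρ M̃ᵀ √ρ = Λ(M)`. On the support of `ρ` take `M̃ᵀ = ρ^{-1/2} Λ(M) ρ^{-1/2}` (with the
pseudo-inverse), which is consistent because `Λ(M) ≤ ρ` forces `Λ(M)` to live on that support; on
the kernel of `ρ`, invisible to `Ψ`, complete it by the compression of `M`.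
-/

open ComplexOrder Matrix

/-- The tensor (Kronecker) product of two `d × d` matrices, as a matrix on
`ℂ^d ⊗ ℂ^d`. -/
def tens2 {d : ℕ} (A B : Matrix (Fin d) (Fin d) ℂ) :
    Matrix (Fin d × Fin d) (Fin d × Fin d) ℂ :=
  Matrix.of fun p q => A p.1 q.1 * B p.2 q.2

open scoped MatrixOrder Kronecker

lemma IsSelfAdjoint.mul_eq_zero_comm {R : Type*} [NonUnitalNonAssocSemiring R] [StarRing R]
    {a b : R} (ha : IsSelfAdjoint a) (hb : IsSelfAdjoint b) : a * b = 0 ↔ b * a = 0 := by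
  constructor <;> intro h <;> simpa [ha.star_eq, hb.star_eq] using congrArg star h

namespace Matrix

variable {m n 𝕜 : Type*} [Fintype m] [Fintype n] [RCLike 𝕜]

section FunctionalCalculus

variable [DecidableEq m]

lemma continuousOn_spectrum_real (A : Matrix m m 𝕜) (f : ℝ → ℝ) :
    ContinuousOn f (spectrum ℝ A) :=
  finite_real_spectrum.continuousOn f

lemma sqrt_eq_cfc_real_sqrt {A : Matrix m m 𝕜} (hA : 0 ≤ A) : CFC.sqrt A = cfc Real.sqrt A := by
  rw [CFC.sqrt_eq_real_sqrt A hA, cfcₙ_eq_cfc]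

/-- The Moore–Penrose pseudo-inverse of `√A` (recall `(√0)⁻¹ = 0`). -/
noncomputable def pinvSqrt (A : Matrix m m 𝕜) : Matrix m m 𝕜 :=
  cfc (fun x : ℝ => (√x)⁻¹) A

/-- The orthogonal projection onto the support of `A ≥ 0`. -/
noncomputable def supportProj (A : Matrix m m 𝕜) : Matrix m m 𝕜 :=
  cfc (fun x : ℝ => √x * (√x)⁻¹) A

variable {A : Matrix m m 𝕜}

lemma isSelfAdjoint_pinvSqrt : IsSelfAdjoint (pinvSqrt A) := cfc_predicate _ _

lemma isSelfAdjoint_supportProj : IsSelfAdjoint (supportProj A) := cfc_predicate _ _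

lemma isIdempotentElem_supportProj : IsIdempotentElem (supportProj A) := by
  rw [IsIdempotentElem, supportProj,
    ← cfc_mul _ _ _ (continuousOn_spectrum_real A _) (continuousOn_spectrum_real A _)]
  simp_rw [← mul_assoc, mul_inv_mul_cancel]

lemma isSelfAdjoint_one_sub_supportProj : IsSelfAdjoint (1 - supportProj A) :=
  (IsSelfAdjoint.one _).sub isSelfAdjoint_supportProj

lemma sqrt_mul_pinvSqrt (hA : 0 ≤ A) : CFC.sqrt A * pinvSqrt A = supportProj A := by
  rw [sqrt_eq_cfc_real_sqrt hA, pinvSqrt, supportProj,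
    cfc_mul _ _ _ (hg := continuousOn_spectrum_real A _)]

lemma pinvSqrt_mul_sqrt (hA : 0 ≤ A) : pinvSqrt A * CFC.sqrt A = supportProj A := by
  rw [sqrt_eq_cfc_real_sqrt hA, pinvSqrt, supportProj,
    ← cfc_mul _ _ _ (continuousOn_spectrum_real A _)]
  simp_rw [mul_comm]

lemma sqrt_mul_one_sub_supportProj (hA : 0 ≤ A) : CFC.sqrt A * (1 - supportProj A) = 0 := by
  rw [mul_sub, mul_one, sqrt_eq_cfc_real_sqrt hA, supportProj,
    ← cfc_mul _ _ _ (hg := continuousOn_spectrum_real A _)]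
  simp_rw [← mul_assoc, mul_self_mul_inv, sub_self]

lemma pinvSqrt_mul_mul_pinvSqrt (hA : 0 ≤ A) : pinvSqrt A * A * pinvSqrt A = supportProj A := by
  calc pinvSqrt A * A * pinvSqrt A
      = (pinvSqrt A * CFC.sqrt A) * (CFC.sqrt A * pinvSqrt A) := by
        rw [← mul_assoc _ (CFC.sqrt A), mul_assoc (pinvSqrt A) (CFC.sqrt A),
          CFC.sqrt_mul_sqrt_self A hA]
    _ = supportProj A := by
      rw [pinvSqrt_mul_sqrt hA, sqrt_mul_pinvSqrt hA, isIdempotentElem_supportProj.eq]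

lemma mul_one_sub_supportProj (hA : 0 ≤ A) : A * (1 - supportProj A) = 0 := by
  calc A * (1 - supportProj A) = CFC.sqrt A * (CFC.sqrt A * (1 - supportProj A)) := by
        rw [← mul_assoc, CFC.sqrt_mul_sqrt_self A hA]
    _ = 0 := by rw [sqrt_mul_one_sub_supportProj hA, mul_zero]

end FunctionalCalculus

lemma mul_eq_zero_of_le_of_mul_eq_zero [DecidableEq m] {X ρ Q : Matrix m m 𝕜} (hX : 0 ≤ X)
    (hXρ : X ≤ ρ) (hρQ : ρ * Q = 0) : X * Q = 0 := by
  obtain ⟨R, rfl⟩ := CStarAlgebra.nonneg_iff_eq_star_mul_self.mp hX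
  have hle : star Q * (star R * R) * Q ≤ 0 := by
    simpa [mul_assoc, hρQ] using star_left_conjugate_le_conjugate hXρ Q
  have hRQ : (R * Q)ᴴ * (R * Q) = 0 := by
    rw [conjTranspose_mul, ← star_eq_conjTranspose, ← star_eq_conjTranspose]
    simpa only [mul_assoc] using le_antisymm hle (star_left_conjugate_nonneg hX Q)
  rw [mul_assoc, conjTranspose_mul_self_eq_zero.mp hRQ, mul_zero]

local notation ψ " ⊗ᵥ " φ => fun p => ψ (Prod.fst p) * φ (Prod.snd p)

/-- The partial trace `Tr_B (W (1 ⊗ B))`. -/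
def traceRightMul (W : Matrix (m × n) (m × n) 𝕜) : Matrix n n 𝕜 →ₗ[𝕜] Matrix m m 𝕜 where
  toFun B := of fun i k => ∑ j, ∑ l, W (i, j) (k, l) * B l j
  map_add' B C := by ext; simp [mul_add, Finset.sum_add_distrib]
  map_smul' c B := by ext; simp [Finset.mul_sum, mul_left_comm c]

omit [Fintype m] in
lemma traceRightMul_apply (W : Matrix (m × n) (m × n) 𝕜) (B : Matrix n n 𝕜) (i k : m) :
    traceRightMul W B i k = ∑ j, ∑ l, W (i, j) (k, l) * B l j := rfl

lemma trace_mul_kronecker (W : Matrix (m × n) (m × n) 𝕜) (A : Matrix m m 𝕜) (B : Matrix n n 𝕜) :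
    (W * (A ⊗ₖ B)).trace = (A * traceRightMul W B).trace := by
  simp only [trace, diag_apply, mul_apply, traceRightMul_apply, kroneckerMap_apply,
    Fintype.sum_prod_type, Finset.mul_sum]
  conv_rhs => rw [Finset.sum_comm]; enter [2, i]; rw [Finset.sum_comm]
  simp only [mul_left_comm (A _ _)]

lemma trace_traceRightMul_one [DecidableEq n] (W : Matrix (m × n) (m × n) 𝕜) :
    (traceRightMul W 1).trace = W.trace := by
  simp [trace, traceRightMul_apply, one_apply, Fintype.sum_prod_type]

omit [Fintype m] in
lemma isHermitian_traceRightMul {W : Matrix (m × n) (m × n) 𝕜} (hW : W.IsHermitian)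
    {B : Matrix n n 𝕜} (hB : B.IsHermitian) : (traceRightMul W B).IsHermitian := by
  ext i k
  simp only [conjTranspose_apply, traceRightMul_apply, star_sum, star_mul', hW.apply, hB.apply]
  exact Finset.sum_comm

def IsBlockPositive (W : Matrix (m × n) (m × n) 𝕜) : Prop :=
  ∀ (ψ : m → 𝕜) (φ : n → 𝕜), 0 ≤ star (ψ ⊗ᵥ φ) ⬝ᵥ W *ᵥ (ψ ⊗ᵥ φ)

lemma exists_pos_smul_normalized {v : m → 𝕜} (hv : v ≠ 0) :
    ∃ r : ℝ, 0 < r ∧ star ((r : 𝕜) • v) ⬝ᵥ ((r : 𝕜) • v) = 1 := by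
  obtain ⟨q, hq0, hq⟩ := RCLike.nonneg_iff_exists_ofReal.mp (dotProduct_star_self_nonneg v)
  have hqpos : 0 < q := hq0.lt_of_ne <| by
    rintro rfl
    exact hv (dotProduct_star_self_eq_zero.mp (by simp [← hq]))
  refine ⟨(√q)⁻¹, by positivity, ?_⟩
  rw [star_smul, smul_dotProduct, dotProduct_smul, ← hq, RCLike.star_def, RCLike.conj_ofReal,
    smul_eq_mul, smul_eq_mul, ← RCLike.ofReal_mul, ← RCLike.ofReal_mul, ← mul_assoc, ← mul_inv,
    Real.mul_self_sqrt hq0, inv_mul_cancel₀ hqpos.ne', RCLike.ofReal_one]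

lemma isBlockPositive_of_normalized {W : Matrix (m × n) (m × n) 𝕜} (hW : W.IsHermitian)
    (h : ∀ (ψ : m → 𝕜) (φ : n → 𝕜), star ψ ⬝ᵥ ψ = 1 → star φ ⬝ᵥ φ = 1 →
      0 ≤ RCLike.re (star (ψ ⊗ᵥ φ) ⬝ᵥ W *ᵥ (ψ ⊗ᵥ φ))) :
    IsBlockPositive W := by
  intro ψ φ
  refine RCLike.nonneg_iff.mpr ⟨?_, hW.im_star_dotProduct_mulVec_self _⟩
  rcases eq_or_ne ψ 0 with rfl | hψ
  · simp [← Pi.zero_def]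
  rcases eq_or_ne φ 0 with rfl | hφ
  · simp [← Pi.zero_def]
  obtain ⟨r, hr, hrψ⟩ := exists_pos_smul_normalized hψ
  obtain ⟨s, hs, hsφ⟩ := exists_pos_smul_normalized hφ
  have hscale : (((r : 𝕜) • ψ) ⊗ᵥ ((s : 𝕜) • φ)) = ((r * s : ℝ) : 𝕜) • (ψ ⊗ᵥ φ) := by
    ext p
    simp only [Pi.smul_apply, smul_eq_mul, map_mul]
    ring
  have key := h _ _ hrψ hsφ
  rw [hscale, star_smul, smul_dotProduct, mulVec_smul, dotProduct_smul] at key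
  simp only [RCLike.star_def, RCLike.conj_ofReal, smul_eq_mul, RCLike.re_ofReal_mul]
    at key
  rw [← mul_assoc] at key
  exact nonneg_of_mul_nonneg_right key (by positivity)

lemma star_dotProduct_traceRightMul_vecMulVec_mulVec (W : Matrix (m × n) (m × n) 𝕜)
    (x : m → 𝕜) (v : n → 𝕜) :
    star x ⬝ᵥ traceRightMul W (vecMulVec v (star v)) *ᵥ x =
      star (x ⊗ᵥ v) ⬝ᵥ W *ᵥ (x ⊗ᵥ v) := by
  simp only [dotProduct, mulVec, traceRightMul_apply, vecMulVec_apply, Pi.star_apply,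
    Fintype.sum_prod_type, Finset.mul_sum, Finset.sum_mul, star_mul']
  refine Finset.sum_congr rfl fun i _ => Finset.sum_comm.trans ?_
  refine Finset.sum_congr rfl fun j _ => Finset.sum_congr rfl fun k _ =>
    Finset.sum_congr rfl fun l _ => ?_
  ring

lemma traceRightMul_nonneg {W : Matrix (m × n) (m × n) 𝕜} (hW : W.IsHermitian)
    (hWpos : IsBlockPositive W) {B : Matrix n n 𝕜} (hB : 0 ≤ B) : 0 ≤ traceRightMul W B := by
  have hBpsd := hB.posSemidef
  refine (PosSemidef.of_dotProduct_mulVec_nonneg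
    (isHermitian_traceRightMul hW hBpsd.isHermitian) fun x => ?_).nonneg
  obtain ⟨r, v, rfl⟩ := posSemidef_iff_eq_sum_vecMulVec.mp hBpsd
  simp only [map_sum, sum_mulVec, dotProduct_sum, star_dotProduct_traceRightMul_vecMulVec_mulVec]
  exact Finset.sum_nonneg fun s _ => hWpos x (v s)

lemma traceRightMul_mono {W : Matrix (m × n) (m × n) 𝕜} (hW : W.IsHermitian)
    (hWpos : IsBlockPositive W) {B C : Matrix n n 𝕜} (hBC : B ≤ C) :
    traceRightMul W B ≤ traceRightMul W C := by
  rw [← sub_nonneg, ← map_sub]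
  exact traceRightMul_nonneg hW hWpos (sub_nonneg.mpr hBC)

lemma star_vec_dotProduct_kronecker_mulVec_vec {S : Matrix m m 𝕜} (hS : S.IsHermitian)
    (A C : Matrix m m 𝕜) :
    star (vec Sᵀ) ⬝ᵥ (A ⊗ₖ C) *ᵥ vec Sᵀ = (A * S * Cᵀ * S).trace := by
  rw [kronecker_mulVec_vec, star_vec_dotProduct_vec, ← trace_transpose]
  simp [transpose_mul, conjTranspose_transpose_eq_transpose_conjTranspose, hS.eq, mul_assoc]

section LiftEffect

variable [DecidableEq m]

noncomputable def liftEffect (ρ Y M : Matrix m m 𝕜) : Matrix m m 𝕜 :=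
  pinvSqrt ρ * Y * pinvSqrt ρ + (1 - supportProj ρ) * M * (1 - supportProj ρ)

variable {ρ Y M : Matrix m m 𝕜}

lemma liftEffect_nonneg (hY : 0 ≤ Y) (hM : 0 ≤ M) : 0 ≤ liftEffect ρ Y M :=
  add_nonneg (IsSelfAdjoint.conjugate_nonneg hY isSelfAdjoint_pinvSqrt)
    (IsSelfAdjoint.conjugate_nonneg hM isSelfAdjoint_one_sub_supportProj)

lemma sum_liftEffect {ι : Type*} [Fintype ι] (hρ : 0 ≤ ρ) {Y M : ι → Matrix m m 𝕜}
    (hY : ∑ i, Y i = ρ) (hM : ∑ i, M i = 1) : ∑ i, liftEffect ρ (Y i) (M i) = 1 := by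
  simp only [liftEffect, Finset.sum_add_distrib, ← Finset.sum_mul, ← Finset.mul_sum, hY, hM,
    mul_one, pinvSqrt_mul_mul_pinvSqrt hρ, (isIdempotentElem_supportProj (A := ρ)).one_sub.eq]
  exact add_sub_cancel _ _

lemma sqrt_mul_liftEffect_mul_sqrt (hρ : 0 ≤ ρ) (hY : 0 ≤ Y) (hYρ : Y ≤ ρ) (M : Matrix m m 𝕜) :
    CFC.sqrt ρ * liftEffect ρ Y M * CFC.sqrt ρ = Y := by
  have hQ : IsSelfAdjoint (1 - supportProj ρ) := isSelfAdjoint_one_sub_supportProj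
  have hSQ := sqrt_mul_one_sub_supportProj hρ
  have hQS := (IsSelfAdjoint.mul_eq_zero_comm (CFC.sqrt_nonneg ρ).isSelfAdjoint hQ).mp hSQ
  have hYQ := mul_eq_zero_of_le_of_mul_eq_zero hY hYρ (mul_one_sub_supportProj hρ)
  have hYP : Y = Y * supportProj ρ := sub_eq_zero.mp <| (mul_one_sub _ _).symm.trans hYQ
  have hPY : Y = supportProj ρ * Y := sub_eq_zero.mp <| (one_sub_mul _ _).symm.trans <|
    (IsSelfAdjoint.mul_eq_zero_comm hY.isSelfAdjoint hQ).mp hYQ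
  calc CFC.sqrt ρ * liftEffect ρ Y M * CFC.sqrt ρ
      = (CFC.sqrt ρ * pinvSqrt ρ) * Y * (pinvSqrt ρ * CFC.sqrt ρ) +
          (CFC.sqrt ρ * (1 - supportProj ρ)) * M *
            ((1 - supportProj ρ) * CFC.sqrt ρ) := by
        simp only [liftEffect, mul_add, add_mul, mul_assoc]
    _ = Y := by
      rw [sqrt_mul_pinvSqrt hρ, pinvSqrt_mul_sqrt hρ, hSQ, hQS, zero_mul, zero_mul, add_zero,
        ← hPY, ← hYP]

end LiftEffect

end Matrix

lemma tens2_eq_kronecker {d : ℕ} (A B : Matrix (Fin d) (Fin d) ℂ) : tens2 A B = A ⊗ₖ B := rfl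

theorem bipartite_gleason_is_quantum_general (d : ℕ)
    (X₁ X₂ A₁ A₂ : Type) [Fintype A₂]
    (W : Matrix (Fin d × Fin d) (Fin d × Fin d) ℂ)
    (hherm : W.IsHermitian) (htr : W.trace = 1)
    (hblockpos : ∀ ψ φ : Fin d → ℂ,
      star ψ ⬝ᵥ ψ = 1 → star φ ⬝ᵥ φ = 1 →
      0 ≤ (star (fun p : Fin d × Fin d => ψ p.1 * φ p.2) ⬝ᵥ
            W.mulVec (fun p : Fin d × Fin d => ψ p.1 * φ p.2)).re)
    (M₁ : X₁ → A₁ → Matrix (Fin d) (Fin d) ℂ)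
    (M₂ : X₂ → A₂ → Matrix (Fin d) (Fin d) ℂ)
    (hM₂pos : ∀ x a, (M₂ x a).PosSemidef) (hM₂sum : ∀ x, ∑ a, M₂ x a = 1) :
    ∃ (Ψ : Fin d × Fin d → ℂ) (M₂' : X₂ → A₂ → Matrix (Fin d) (Fin d) ℂ),
      star Ψ ⬝ᵥ Ψ = 1 ∧
      (∀ x a, (M₂' x a).PosSemidef) ∧ (∀ x, ∑ a, M₂' x a = 1) ∧
      ∀ (x₁ : X₁) (a₁ : A₁) (x₂ : X₂) (a₂ : A₂),
        (W * tens2 (M₁ x₁ a₁) (M₂ x₂ a₂)).trace =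
          star Ψ ⬝ᵥ (tens2 (M₁ x₁ a₁) (M₂' x₂ a₂)).mulVec Ψ := by
  have hWpos : IsBlockPositive W := isBlockPositive_of_normalized hherm hblockpos
  set ρ := traceRightMul W 1
  have hρ : 0 ≤ ρ := traceRightMul_nonneg hherm hWpos PosSemidef.one.nonneg
  have hS : (CFC.sqrt ρ).IsHermitian := (CFC.sqrt_nonneg ρ).isSelfAdjoint
  have hY : ∀ x a, 0 ≤ traceRightMul W (M₂ x a) := fun x a =>
    traceRightMul_nonneg hherm hWpos (hM₂pos x a).nonneg
  have hYρ : ∀ x a, traceRightMul W (M₂ x a) ≤ ρ := fun x a =>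
    traceRightMul_mono hherm hWpos <| hM₂sum x ▸
      Finset.single_le_sum (fun a _ => (hM₂pos x a).nonneg) (Finset.mem_univ a)
  refine ⟨vec (CFC.sqrt ρ)ᵀ, fun x a => (liftEffect ρ (traceRightMul W (M₂ x a)) (M₂ x a))ᵀ,
    ?_, fun x a => (liftEffect_nonneg (hY x a) (hM₂pos x a).nonneg).posSemidef.transpose,
    fun x => ?_, fun x₁ a₁ x₂ a₂ => ?_⟩
  · have h := star_vec_dotProduct_kronecker_mulVec_vec hS 1 1
    rwa [one_kronecker_one, one_mulVec, transpose_one, one_mul, mul_one,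
      CFC.sqrt_mul_sqrt_self ρ hρ, trace_traceRightMul_one, htr] at h
  · rw [← transpose_sum, sum_liftEffect hρ (by rw [← map_sum, hM₂sum]) (hM₂sum x), transpose_one]
  · rw [tens2_eq_kronecker, tens2_eq_kronecker, trace_mul_kronecker,
      star_vec_dotProduct_kronecker_mulVec_vec hS, transpose_transpose, mul_assoc _ (CFC.sqrt ρ),
      mul_assoc, sqrt_mul_liftEffect_mul_sqrt hρ (hY x₂ a₂) (hYρ x₂ a₂)]

/-- Bipartite Gleason correlations are quantum: if `W` is an entanglement
witness (Hermitian, trace one, positive on all product states) and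
`M¹, M²` are local POVMs (with finite input sets `X₁, X₂` and outcome sets
`A₁, A₂`), then there are a pure quantum state `Ψ` and a transformed POVM `M̃²`
for Bob such that `tr(W M¹ ⊗ M²) = ⟨Ψ| M¹ ⊗ M̃² |Ψ⟩` for all inputs and
outcomes. -/
theorem bipartite_gleason_is_quantum (d : ℕ) (hd : 0 < d)
    (X₁ X₂ A₁ A₂ : Type) [Fintype A₁] [Fintype A₂]
    (W : Matrix (Fin d × Fin d) (Fin d × Fin d) ℂ)
    (hherm : W.IsHermitian) (htr : W.trace = 1)
    (hblockpos : ∀ ψ φ : Fin d → ℂ,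
      star ψ ⬝ᵥ ψ = 1 → star φ ⬝ᵥ φ = 1 →
      0 ≤ (star (fun p : Fin d × Fin d => ψ p.1 * φ p.2) ⬝ᵥ
            W.mulVec (fun p : Fin d × Fin d => ψ p.1 * φ p.2)).re)
    (M₁ : X₁ → A₁ → Matrix (Fin d) (Fin d) ℂ)
    (M₂ : X₂ → A₂ → Matrix (Fin d) (Fin d) ℂ)
    (hM₁pos : ∀ x a, (M₁ x a).PosSemidef) (hM₁sum : ∀ x, ∑ a, M₁ x a = 1)
    (hM₂pos : ∀ x a, (M₂ x a).PosSemidef) (hM₂sum : ∀ x, ∑ a, M₂ x a = 1) :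
    ∃ (Ψ : Fin d × Fin d → ℂ) (M₂' : X₂ → A₂ → Matrix (Fin d) (Fin d) ℂ),
      star Ψ ⬝ᵥ Ψ = 1 ∧
      (∀ x a, (M₂' x a).PosSemidef) ∧ (∀ x, ∑ a, M₂' x a = 1) ∧
      ∀ (x₁ : X₁) (a₁ : A₁) (x₂ : X₂) (a₂ : A₂),
        (W * tens2 (M₁ x₁ a₁) (M₂ x₂ a₂)).trace =
          star Ψ ⬝ᵥ (tens2 (M₁ x₁ a₁) (M₂' x₂ a₂)).mulVec Ψ :=
  bipartite_gleason_is_quantum_general d X₁ X₂ A₁ A₂ W hherm htr hblockpos M₁ M₂ hM₂pos hM₂sum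
end

section
/- Measuring the witness W = (Π − ε·1)/(4 − 8ε) built from the three-qubit Shifts UPB along the local bases {|0⟩,|1⟩} and {|e⟩,|ē⟩} yields a GYNI score (sum of the four GYNI probability terms) equal to (1−ε)/(1−2ε) > 1, exceeding the quantum bound of 1. -/
/-!
Each Shifts vector `ψ_m` is the product of the local projectors selected by one GYNI term, so
that term equals `⟨ψ_m|W|ψ_m⟩ = (1 - ε)/(4 - 8ε)`, the `ψ_m` being orthonormal; the four terms
add up to `(1 - ε)/(1 - 2ε)`, which exceeds `1` as soon as `0 < ε < 1/2`.
Positivity of `ε` is unextendibility: a product state orthogonal to all four `ψ_m` would, by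
pigeonhole over the three parties, be orthogonal at one party to two of the vectors
`|0⟩, |1⟩, |e⟩, |ē⟩`, any two of which span `ℂ²`. The upper bound comes from the product
state `|001⟩`, whose expectation is `|e₀|²|e₁|² ≤ 1/4`.
-/

open Matrix

/-- The three-qubit Hilbert space `ℂ² ⊗ ℂ² ⊗ ℂ²`. -/
abbrev Q3 := Fin 2 × Fin 2 × Fin 2

/-- Product vector `α ⊗ β ⊗ γ` of three qubit vectors. -/
def vt (α β γ : Fin 2 → ℂ) : Q3 → ℂ := fun p => α p.1 * β p.2.1 * γ p.2.2

/-- A unit vector. -/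
def unitVec (v : Fin 2 → ℂ) : Prop := star v ⬝ᵥ v = 1

/-- Rank-one projector `|ψ⟩⟨ψ|` on three qubits. -/
def outer (ψ : Q3 → ℂ) : Matrix Q3 Q3 ℂ := Matrix.of fun u w => ψ u * star (ψ w)

/-- Rank-one projector `|v⟩⟨v|` on one qubit. -/
def proj1 (v : Fin 2 → ℂ) : Matrix (Fin 2) (Fin 2) ℂ :=
  Matrix.of fun i j => v i * star (v j)

/-- Tensor product of three one-qubit matrices. -/
def tens3 (A B C : Matrix (Fin 2) (Fin 2) ℂ) : Matrix Q3 Q3 ℂ :=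
  Matrix.of fun u w => A u.1 w.1 * B u.2.1 w.2.1 * C u.2.2 w.2.2

def ket0 : Fin 2 → ℂ := ![1, 0]
def ket1 : Fin 2 → ℂ := ![0, 1]

/-- Local two-outcome projective measurement: for input `false` measure in the
computational basis `{|0⟩,|1⟩}`, for input `true` in the basis `{|e⟩,|ē⟩}`;
the outcome selects the corresponding basis projector. -/
def meas (e eb : Fin 2 → ℂ) : Bool → Bool → Matrix (Fin 2) (Fin 2) ℂ
  | false, false => proj1 ket0
  | false, true => proj1 ket1
  | true, false => proj1 e
  | true, true => proj1 eb

lemma tens3_proj1 (a b c : Fin 2 → ℂ) :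
    tens3 (proj1 a) (proj1 b) (proj1 c) = outer (vt a b c) := by
  ext ⟨i, j, k⟩ ⟨i', j', k'⟩
  simp only [tens3, proj1, outer, vt, of_apply, star_mul']
  ring

lemma star_vt_dotProduct_vt (a b c a' b' c' : Fin 2 → ℂ) :
    star (vt a b c) ⬝ᵥ vt a' b' c' = (star a ⬝ᵥ a') * (star b ⬝ᵥ b') * (star c ⬝ᵥ c') := by
  simp only [dotProduct, vt, Fintype.sum_prod_type, Fin.sum_univ_two, Pi.star_apply, star_mul']
  ring

lemma trace_mul_outer (M : Matrix Q3 Q3 ℂ) (ψ : Q3 → ℂ) :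
    (M * outer ψ).trace = star ψ ⬝ᵥ M *ᵥ ψ := by
  simp only [trace, diag, mul_apply, outer, of_apply, dotProduct, mulVec, Finset.mul_sum,
    Pi.star_apply]
  exact Finset.sum_congr rfl fun _ _ => Finset.sum_congr rfl fun _ _ => by ring

lemma star_dotProduct_outer_mulVec (ψ v : Q3 → ℂ) :
    star v ⬝ᵥ outer ψ *ᵥ v = (Complex.normSq (star ψ ⬝ᵥ v) : ℂ) := by
  have hmulVec : outer ψ *ᵥ v = (star ψ ⬝ᵥ v) • ψ := by
    ext u
    simp only [mulVec, outer, dotProduct, of_apply, Pi.smul_apply, smul_eq_mul,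
      Finset.sum_mul, Pi.star_apply]
    exact Finset.sum_congr rfl fun _ _ => by ring
  rw [hmulVec, dotProduct_smul, smul_eq_mul, Complex.normSq_eq_conj_mul_self, star_dotProduct v ψ,
    mul_comm]
  rfl

lemma star_dotProduct_sum_outer_mulVec {ι : Type*} [Fintype ι] (ψ : ι → Q3 → ℂ) (v : Q3 → ℂ) :
    star v ⬝ᵥ (∑ i, outer (ψ i)) *ᵥ v = ((∑ i, Complex.normSq (star (ψ i) ⬝ᵥ v) : ℝ) : ℂ) := by
  simp only [sum_mulVec, dotProduct_sum, star_dotProduct_outer_mulVec, Complex.ofReal_sum]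

lemma eq_zero_of_forall_star_row_dotProduct_eq_zero {n : Type*} [Fintype n] [DecidableEq n]
    {A : Matrix n n ℂ} (hA : A.det ≠ 0) {x : n → ℂ} (hx : ∀ i, star (A i) ⬝ᵥ x = 0) : x = 0 := by
  have hdet : (A.map star).det ≠ 0 := by
    have : A.map star = Aᴴᵀ := rfl
    rw [this, det_transpose, det_conjTranspose]
    exact star_ne_zero.mpr hA
  exact eq_zero_of_mulVec_eq_zero hdet (funext hx)

lemma exists_forall_star_dotProduct_ne_zero {ι κ : Type*} [Fintype ι] [Fintype κ]
    (hcard : Fintype.card κ < Fintype.card ι) (v : ι → κ → Fin 2 → ℂ)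
    (hv : ∀ k m m', m ≠ m' → (of ![v m k, v m' k]).det ≠ 0)
    {x : κ → Fin 2 → ℂ} (hx : ∀ k, x k ≠ 0) : ∃ m, ∀ k, star (v m k) ⬝ᵥ x k ≠ 0 := by
  by_contra! h
  choose f hf using h
  obtain ⟨m, m', hne, hk⟩ := Fintype.exists_ne_map_eq_of_card_lt f hcard
  refine hx (f m) (eq_zero_of_forall_star_row_dotProduct_eq_zero (hv (f m) m m' hne) ?_)
  rw [Fin.forall_fin_two]
  exact ⟨hf m, hk ▸ hf m'⟩

lemma unitVec.normSq_add {v : Fin 2 → ℂ} (hv : unitVec v) :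
    Complex.normSq (v 0) + Complex.normSq (v 1) = 1 := by
  have : ((Complex.normSq (v 0) + Complex.normSq (v 1) : ℝ) : ℂ) = 1 := by
    rw [← hv]
    simp [dotProduct, Fin.sum_univ_two, Complex.normSq_eq_conj_mul_self]
  exact_mod_cast this

lemma unitVec.ne_zero {v : Fin 2 → ℂ} (hv : unitVec v) : v ≠ 0 := by
  rintro rfl
  simp [unitVec] at hv

@[simp] lemma star_ket0_dotProduct (v : Fin 2 → ℂ) : star ket0 ⬝ᵥ v = v 0 := by
  simp [ket0, dotProduct, Fin.sum_univ_two]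

@[simp] lemma star_ket1_dotProduct (v : Fin 2 → ℂ) : star ket1 ⬝ᵥ v = v 1 := by
  simp [ket1, dotProduct, Fin.sum_univ_two]

@[simp] lemma ket0_zero : ket0 0 = 1 := rfl
@[simp] lemma ket0_one : ket0 1 = 0 := rfl
@[simp] lemma ket1_zero : ket1 0 = 0 := rfl
@[simp] lemma ket1_one : ket1 1 = 1 := rfl

lemma unitVec_ket0 : unitVec ket0 := by rw [unitVec, star_ket0_dotProduct]; rfl

lemma unitVec_ket1 : unitVec ket1 := by rw [unitVec, star_ket1_dotProduct]; rfl

lemma star_dotProduct_eq_zero_comm {u v : Fin 2 → ℂ} (h : star u ⬝ᵥ v = 0) :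
    star v ⬝ᵥ u = 0 := by
  rw [star_dotProduct, h, star_zero]

section Orthonormal

variable {e eb : Fin 2 → ℂ} (he : unitVec e) (heb : unitVec eb) (horth : star e ⬝ᵥ eb = 0)
include he heb horth

lemma normSq_zero_eq_of_orthonormal :
    Complex.normSq (eb 0) = Complex.normSq (e 1) := by
  have hprod : Complex.normSq (e 0) * Complex.normSq (eb 0)
      = Complex.normSq (e 1) * Complex.normSq (eb 1) := by
    have h : star (e 0) * eb 0 = -(star (e 1) * eb 1) := by
      simp only [dotProduct, Fin.sum_univ_two, Pi.star_apply] at horth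
      exact eq_neg_of_add_eq_zero_left horth
    simpa [Complex.normSq_mul] using congrArg Complex.normSq h
  linear_combination hprod - Complex.normSq (eb 0) * he.normSq_add
    + Complex.normSq (e 1) * heb.normSq_add

lemma det_ne_zero_of_orthonormal : (of ![e, eb]).det ≠ 0 := by
  intro hdet
  simp only [det_fin_two, of_apply, Matrix.cons_val_zero, Matrix.cons_val_one] at hdet
  simp only [dotProduct, Fin.sum_univ_two, Pi.star_apply] at horth
  have hnorm : star (e 0) * e 0 + star (e 1) * e 1 = 1 := by
    simpa [unitVec, dotProduct, Fin.sum_univ_two] using he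
  apply heb.ne_zero
  rw [funext_iff, Fin.forall_fin_two]
  simp only [Pi.zero_apply]
  constructor
  · linear_combination e 0 * horth - star (e 1) * hdet - eb 0 * hnorm
  · linear_combination e 1 * horth + star (e 0) * hdet - eb 1 * hnorm

end Orthonormal

def shifts (e eb : Fin 2 → ℂ) : Fin 4 → Fin 3 → Fin 2 → ℂ :=
  ![![ket0, ket0, ket0], ![ket1, eb, e], ![e, ket1, eb], ![eb, e, ket1]]

def shiftsVec (e eb : Fin 2 → ℂ) (m : Fin 4) : Q3 → ℂ :=
  vt (shifts e eb m 0) (shifts e eb m 1) (shifts e eb m 2)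

def shiftsProj (e eb : Fin 2 → ℂ) : Matrix Q3 Q3 ℂ :=
  ∑ m, outer (shiftsVec e eb m)

section Shifts

variable {e eb : Fin 2 → ℂ} (he : unitVec e) (heb : unitVec eb) (horth : star e ⬝ᵥ eb = 0)
include he heb horth

lemma det_shifts_ne_zero (hne0 : e 0 ≠ 0) (hne1 : e 1 ≠ 0) (k : Fin 3) {m m' : Fin 4}
    (hm : m ≠ m') : (of ![shifts e eb m k, shifts e eb m' k]).det ≠ 0 := by
  have heb0 : eb 0 ≠ 0 := by
    rw [← Complex.normSq_pos, normSq_zero_eq_of_orthonormal he heb horth]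
    exact Complex.normSq_pos.mpr hne1
  have heb1 : eb 1 ≠ 0 := by
    rw [← Complex.normSq_pos,
      ← normSq_zero_eq_of_orthonormal heb he (star_dotProduct_eq_zero_comm horth)]
    exact Complex.normSq_pos.mpr hne0
  have hdet := det_ne_zero_of_orthonormal he heb horth
  simp only [det_fin_two, of_apply, Matrix.cons_val_zero, Matrix.cons_val_one] at hdet ⊢
  have hdet' : eb 0 * e 1 - eb 1 * e 0 ≠ 0 := fun h => hdet (by linear_combination -h)
  fin_cases k <;> fin_cases m <;> fin_cases m' <;>
    simp [shifts, hne0, hne1, heb0, heb1, hdet, hdet'] at hm ⊢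

lemma shiftsVec_orthonormal (m m' : Fin 4) :
    star (shiftsVec e eb m) ⬝ᵥ shiftsVec e eb m' = if m = m' then 1 else 0 := by
  have hbe := star_dotProduct_eq_zero_comm horth
  have he' : star e ⬝ᵥ e = 1 := he
  have heb' : star eb ⬝ᵥ eb = 1 := heb
  fin_cases m <;> fin_cases m' <;>
    simp [shiftsVec, shifts, star_vt_dotProduct_vt, he', heb', horth, hbe]

lemma star_shiftsVec_dotProduct_shiftsProj_mulVec (m : Fin 4) :
    star (shiftsVec e eb m) ⬝ᵥ shiftsProj e eb *ᵥ shiftsVec e eb m = 1 := by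
  simp [shiftsProj, star_dotProduct_sum_outer_mulVec, shiftsVec_orthonormal he heb horth, apply_ite]

lemma shifts_unextendible (hne0 : e 0 ≠ 0) (hne1 : e 1 ≠ 0) {α β γ : Fin 2 → ℂ}
    (hα : unitVec α) (hβ : unitVec β) (hγ : unitVec γ) :
    ∃ m, star (shiftsVec e eb m) ⬝ᵥ vt α β γ ≠ 0 := by
  obtain ⟨m, hm⟩ := exists_forall_star_dotProduct_ne_zero (by simp) (shifts e eb)
    (fun k _ _ => det_shifts_ne_zero he heb horth hne0 hne1 k) (x := ![α, β, γ])
    (by simp [Fin.forall_fin_succ, hα.ne_zero, hβ.ne_zero, hγ.ne_zero])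
  refine ⟨m, ?_⟩
  rw [shiftsVec, star_vt_dotProduct_vt]
  exact mul_ne_zero (mul_ne_zero (hm 0) (hm 1)) (hm 2)

end Shifts

def productExpectations (M : Matrix Q3 Q3 ℂ) : Set ℝ :=
  {r | ∃ α β γ : Fin 2 → ℂ, unitVec α ∧ unitVec β ∧ unitVec γ ∧
    (r : ℂ) = star (vt α β γ) ⬝ᵥ M.mulVec (vt α β γ)}

section Minimum

variable {e eb : Fin 2 → ℂ} {ε : ℝ}
  (hε : IsLeast (productExpectations (shiftsProj e eb)) ε)
include hε

lemma pos_of_isLeast_shifts (he : unitVec e) (heb : unitVec eb)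
    (horth : star e ⬝ᵥ eb = 0) (hne0 : e 0 ≠ 0) (hne1 : e 1 ≠ 0) : 0 < ε := by
  obtain ⟨⟨α, β, γ, hα, hβ, hγ, hval⟩, -⟩ := hε
  rw [shiftsProj, star_dotProduct_sum_outer_mulVec, Complex.ofReal_inj] at hval
  obtain ⟨m, hm⟩ := shifts_unextendible he heb horth hne0 hne1 hα hβ hγ
  rw [hval]
  exact (Complex.normSq_pos.mpr hm).trans_le
    (Finset.single_le_sum (f := fun m => Complex.normSq (star (shiftsVec e eb m) ⬝ᵥ vt α β γ))
      (fun _ _ => Complex.normSq_nonneg _) (Finset.mem_univ m))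

lemma le_one_quarter_of_isLeast_shifts (he : unitVec e) (heb : unitVec eb)
    (horth : star e ⬝ᵥ eb = 0) : ε ≤ 1 / 4 := by
  -- at |001⟩ only the fourth Shifts vector |ē e 1⟩ has a nonzero overlap
  have hval : ∑ m, Complex.normSq (star (shiftsVec e eb m) ⬝ᵥ vt ket0 ket0 ket1)
      = Complex.normSq (e 0) * Complex.normSq (e 1) := by
    simp [Fin.sum_univ_four, shiftsVec, shifts, star_vt_dotProduct_vt,
      normSq_zero_eq_of_orthonormal he heb horth, mul_comm]
  calc ε ≤ Complex.normSq (e 0) * Complex.normSq (e 1) :=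
        hε.2 ⟨ket0, ket0, ket1, unitVec_ket0, unitVec_ket0, unitVec_ket1,
          by rw [shiftsProj, star_dotProduct_sum_outer_mulVec, hval]⟩
    _ ≤ 1 / 4 := by
        nlinarith [he.normSq_add, sq_nonneg (Complex.normSq (e 0) - Complex.normSq (e 1))]

end Minimum

lemma re_trace_mul_outer_of_eq_smul {Pr W : Matrix Q3 Q3 ℂ} {ψ : Q3 → ℂ} {ε : ℝ}
    (hW : W = ((4 - 8 * ε : ℝ) : ℂ)⁻¹ • (Pr - (ε : ℝ) • (1 : Matrix Q3 Q3 ℂ)))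
    (hψ : star ψ ⬝ᵥ ψ = 1) (hPr : star ψ ⬝ᵥ Pr *ᵥ ψ = 1) :
    ((W * outer ψ).trace).re = (1 - ε) / (4 - 8 * ε) := by
  rw [trace_mul_outer, hW, smul_mulVec, dotProduct_smul, sub_mulVec, dotProduct_sub, hPr,
    smul_mulVec, dotProduct_smul, one_mulVec, hψ, ← Complex.ofReal_re ((1 - ε) / (4 - 8 * ε))]
  congr 1
  push_cast [Complex.real_smul, smul_eq_mul]
  ring

/-- Measuring the witness `W = (Π − ε·𝟙)/(4 − 8ε)` built from the three-qubit
Shifts UPB along the local bases `{|0⟩,|1⟩}` and `{|e⟩,|ē⟩}` yields a GYNI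
score `P(000|000)+P(110|011)+P(011|101)+P(101|110) = (1−ε)/(1−2ε) > 1`,
exceeding the quantum bound of `1`. -/
theorem shifts_upb_witness_gyni_score (e eb : Fin 2 → ℂ)
    (he : unitVec e) (heb : unitVec eb) (horth : star e ⬝ᵥ eb = 0)
    (hne0 : e 0 ≠ 0) (hne1 : e 1 ≠ 0)
    (Pr : Matrix Q3 Q3 ℂ)
    (hPr : Pr = outer (vt ket0 ket0 ket0) + outer (vt ket1 eb e)
        + outer (vt e ket1 eb) + outer (vt eb e ket1))
    (ε : ℝ)
    (hε : IsLeast {r : ℝ | ∃ α β γ : Fin 2 → ℂ, unitVec α ∧ unitVec β ∧ unitVec γ ∧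
      (r : ℂ) = star (vt α β γ) ⬝ᵥ Pr.mulVec (vt α β γ)} ε)
    (W : Matrix Q3 Q3 ℂ)
    (hW : W = ((4 - 8 * ε : ℝ) : ℂ)⁻¹ • (Pr - (ε : ℝ) • (1 : Matrix Q3 Q3 ℂ)))
    -- the GYNI probabilities `P(a|x) = tr(W M^{a₁}_{x₁} ⊗ M^{a₂}_{x₂} ⊗ M^{a₃}_{x₃})`
    (P : (Bool × Bool × Bool) → (Bool × Bool × Bool) → ℝ)
    (hP : ∀ x a : Bool × Bool × Bool,
      P x a = ((W * tens3 (meas e eb x.1 a.1) (meas e eb x.2.1 a.2.1)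
        (meas e eb x.2.2 a.2.2)).trace).re) :
    P (false, false, false) (false, false, false)
      + P (false, true, true) (true, true, false)
      + P (true, false, true) (false, true, true)
      + P (true, true, false) (true, false, true) = (1 - ε) / (1 - 2 * ε) ∧
    1 < (1 - ε) / (1 - 2 * ε) := by
  have hPr_shifts : Pr = shiftsProj e eb :=
    hPr.trans (Fin.sum_univ_four (fun m => outer (shiftsVec e eb m))).symm
  rw [hPr_shifts] at hε hW
  have hpos := pos_of_isLeast_shifts hε he heb horth hne0 hne1
  have hquarter := le_one_quarter_of_isLeast_shifts hε he heb horth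
  have hterm (m : Fin 4) :
      ((W * outer (shiftsVec e eb m)).trace).re = (1 - ε) / (4 - 8 * ε) :=
    re_trace_mul_outer_of_eq_smul hW (by simpa using shiftsVec_orthonormal he heb horth m m)
      (star_shiftsVec_dotProduct_shiftsProj_mulVec he heb horth m)
  have hscore : P (false, false, false) (false, false, false)
      + P (false, true, true) (true, true, false)
      + P (true, false, true) (false, true, true)
      + P (true, true, false) (true, false, true)
      = ∑ m, ((W * outer (shiftsVec e eb m)).trace).re := by
    simp only [hP, meas, tens3_proj1, Fin.sum_univ_four]
    rfl
  rw [hscore, Finset.sum_congr rfl fun m _ => hterm m, Finset.sum_const, Finset.card_univ,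
    Fintype.card_fin, nsmul_eq_mul]
  have hden : 0 < 1 - 2 * ε := by linarith
  constructor
  · rw [show (4 : ℝ) - 8 * ε = 4 * (1 - 2 * ε) by ring]
    push_cast
    field_simp
  · rw [lt_div_iff₀ hden]
    linarith
end

section
/- Postselected TOBL correlations are local: if P(a_1,a_2,a_3|x_1,x_2,x_3) admits a TOBL decomposition for the bipartition 1|23, then for any fixed input x̃_3 and outcome ã_3 of party 3 with P(ã_3|x̃_3) > 0, the conditional distribution P(a_1,a_2|x_1,x_2, x̃_3, ã_3) admits a local hidden-variable decomposition Σ_λ P'_λ P(a_1|x_1,λ) P'(a_2|x_2,λ). -/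
/-!
Conditioning on party 3's outcome `ã₃` reweights the hidden variable by the probability
`m λ = P₂₃(ã₃|x̃₃,λ)` of that outcome. Because the signaling only goes from 3 to 2, `m λ`
does not depend on `x₂`, so `P₂₃(a₂,ã₃|x₂,x̃₃,λ) = m λ · P'(a₂|x₂,λ)` with a genuine local
response `P'` of party 2, and the postselected box is a local mixture with weights
`p λ · m λ / P(ã₃|x̃₃)`.
-/

open Finset

namespace Postselection

section Normalize

variable {α : Type*} [Fintype α] [DecidableEq α]

noncomputable def normalize (a₀ : α) (f : α → ℝ) : α → ℝ :=
  if ∑ a, f a = 0 then Pi.single a₀ (1 : ℝ) else fun a => f a / ∑ b, f b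

variable (a₀ : α) {f : α → ℝ}

lemma normalize_nonneg (hf : ∀ a, 0 ≤ f a) (a : α) : 0 ≤ normalize a₀ f a := by
  unfold normalize
  split_ifs
  · exact (Pi.single_nonneg (α := fun _ : α => ℝ)).mpr zero_le_one a
  · exact div_nonneg (hf a) (sum_nonneg fun b _ => hf b)

lemma sum_normalize (f : α → ℝ) : ∑ a, normalize a₀ f a = 1 := by
  unfold normalize
  split_ifs with h
  · simp
  · rw [← sum_div, div_self h]

lemma sum_mul_normalize (hf : ∀ a, 0 ≤ f a) (a : α) :
    (∑ b, f b) * normalize a₀ f a = f a := by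
  unfold normalize
  split_ifs with h
  · rw [h, zero_mul, eq_comm]
    exact (sum_eq_zero_iff_of_nonneg fun b _ => hf b).mp h a (mem_univ a)
  · exact mul_div_cancel₀ (f a) h

end Normalize

lemma exists_reweighted_mixture {α Λ X : Type*} [Fintype α] [Nonempty α] [Fintype Λ]
    [Nonempty X] (p : Λ → ℝ) (hp : ∀ l, 0 ≤ p l) (g : Λ → X → α → ℝ) (hg : ∀ l x a, 0 ≤ g l x a)
    (m : Λ → ℝ) (hm : ∀ l x, ∑ a, g l x a = m l) (hN : 0 < ∑ l, p l * m l) :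
    ∃ (p' : Λ → ℝ) (Q : Λ → X → α → ℝ),
      (∀ l, 0 ≤ p' l) ∧ ∑ l, p' l = 1 ∧
      (∀ l x a, 0 ≤ Q l x a) ∧ (∀ l x, ∑ a, Q l x a = 1) ∧
      ∀ l x a, p l * g l x a / ∑ k, p k * m k = p' l * Q l x a := by
  classical
  obtain ⟨a₀⟩ := ‹Nonempty α›
  obtain ⟨x₀⟩ := ‹Nonempty X›
  refine ⟨fun l => p l * m l / ∑ k, p k * m k, fun l x => normalize a₀ (g l x),
    fun l => ?_, ?_, fun l x => normalize_nonneg a₀ (hg l x), fun l x => sum_normalize a₀ _,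
    fun l x a => ?_⟩
  · have hm_nonneg : 0 ≤ m l := hm l x₀ ▸ sum_nonneg fun a _ => hg l x₀ a
    exact div_nonneg (mul_nonneg (hp l) hm_nonneg) hN.le
  · rw [← sum_div, div_self hN.ne']
  · rw [← sum_mul_normalize a₀ (hg l x) a, hm l x]
    ring

end Postselection

open Postselection in
theorem tobl_postselection_local_general (L : ℕ)
    (P : Bool → Bool → Bool → Bool → Bool → Bool → ℝ)
    (p : Fin L → ℝ) (hp : ∀ l, 0 ≤ p l)
    (P₁ : Fin L → Bool → Bool → ℝ)  -- `P₁ l x₁ a₁`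
    (P₂₃ : Fin L → Bool → Bool → Bool → Bool → ℝ)  -- `P₂₃ l x₂ x₃ a₂ a₃`
    (hP₂₃pos : ∀ l x₂ x₃ a₂ a₃, 0 ≤ P₂₃ l x₂ x₃ a₂ a₃)
    (hdir : ∀ l x₂ x₂' x₃ a₃,
      ∑ a₂ : Bool, P₂₃ l x₂ x₃ a₂ a₃ = ∑ a₂ : Bool, P₂₃ l x₂' x₃ a₂ a₃)
    (hdecomp : ∀ x₁ x₂ x₃ a₁ a₂ a₃,
      P x₁ x₂ x₃ a₁ a₂ a₃ = ∑ l, p l * P₁ l x₁ a₁ * P₂₃ l x₂ x₃ a₂ a₃)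
    (x₃' a₃' : Bool)
    (hmarg : 0 < ∑ l, p l * ∑ a₂ : Bool, P₂₃ l false x₃' a₂ a₃') :
    ∃ (p' : Fin L → ℝ) (Q₂ : Fin L → Bool → Bool → ℝ),
      (∀ l, 0 ≤ p' l) ∧ ∑ l, p' l = 1 ∧
      (∀ l x₂ a₂, 0 ≤ Q₂ l x₂ a₂) ∧ (∀ l x₂, ∑ a₂ : Bool, Q₂ l x₂ a₂ = 1) ∧
      ∀ x₁ x₂ a₁ a₂,
        P x₁ x₂ x₃' a₁ a₂ a₃' / (∑ l, p l * ∑ b : Bool, P₂₃ l false x₃' b a₃') =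
          ∑ l, p' l * P₁ l x₁ a₁ * Q₂ l x₂ a₂ := by
  obtain ⟨p', Q₂, hp', hp'1, hQ₂, hQ₂1, hfactor⟩ :=
    exists_reweighted_mixture p hp (fun l x₂ a₂ => P₂₃ l x₂ x₃' a₂ a₃')
      (fun l x₂ a₂ => hP₂₃pos l x₂ x₃' a₂ a₃')
      (fun l => ∑ b : Bool, P₂₃ l false x₃' b a₃') (fun l x₂ => hdir l x₂ false x₃' a₃') hmarg
  refine ⟨p', Q₂, hp', hp'1, hQ₂, hQ₂1, fun x₁ x₂ a₁ a₂ => ?_⟩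
  rw [hdecomp, sum_div]
  refine sum_congr rfl fun l _ => ?_
  linear_combination P₁ l x₁ a₁ * hfactor l x₂ a₂

/-- Postselected TOBL correlations are local.  Suppose the tripartite box
`P(a₁,a₂,a₃|x₁,x₂,x₃)` admits a TOBL decomposition for the bipartition `1|23`
in the time order `2 ← 3`:
`P = ∑_λ p λ · P₁(a₁|x₁,λ) · P₂₃(a₂,a₃|x₂,x₃,λ)`,
where the marginal of `P₂₃` on `a₃` is independent of `x₂` (signaling allowed
only from `3` to `2`).  Then, for any fixed input `x̃₃` and outcome `ã₃` of
party `3` occurring with positive probability, the conditional distribution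
`P(a₁,a₂|x₁,x₂,x̃₃,ã₃)` admits a local hidden-variable decomposition. -/
theorem tobl_postselection_local (L : ℕ)
    (P : Bool → Bool → Bool → Bool → Bool → Bool → ℝ)
    (p : Fin L → ℝ) (hp : ∀ l, 0 ≤ p l) (hp1 : ∑ l, p l = 1)
    (P₁ : Fin L → Bool → Bool → ℝ)  -- `P₁ l x₁ a₁`
    (hP₁pos : ∀ l x₁ a₁, 0 ≤ P₁ l x₁ a₁)
    (hP₁norm : ∀ l x₁, ∑ a₁ : Bool, P₁ l x₁ a₁ = 1)
    (P₂₃ : Fin L → Bool → Bool → Bool → Bool → ℝ)  -- `P₂₃ l x₂ x₃ a₂ a₃`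
    (hP₂₃pos : ∀ l x₂ x₃ a₂ a₃, 0 ≤ P₂₃ l x₂ x₃ a₂ a₃)
    (hP₂₃norm : ∀ l x₂ x₃, ∑ a₂ : Bool, ∑ a₃ : Bool, P₂₃ l x₂ x₃ a₂ a₃ = 1)
    (hdir : ∀ l x₂ x₂' x₃ a₃,
      ∑ a₂ : Bool, P₂₃ l x₂ x₃ a₂ a₃ = ∑ a₂ : Bool, P₂₃ l x₂' x₃ a₂ a₃)
    (hdecomp : ∀ x₁ x₂ x₃ a₁ a₂ a₃,
      P x₁ x₂ x₃ a₁ a₂ a₃ = ∑ l, p l * P₁ l x₁ a₁ * P₂₃ l x₂ x₃ a₂ a₃)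
    (x₃' a₃' : Bool)
    (hmarg : 0 < ∑ l, p l * ∑ a₂ : Bool, P₂₃ l false x₃' a₂ a₃') :
    ∃ (p' : Fin L → ℝ) (Q₂ : Fin L → Bool → Bool → ℝ),
      (∀ l, 0 ≤ p' l) ∧ ∑ l, p' l = 1 ∧
      (∀ l x₂ a₂, 0 ≤ Q₂ l x₂ a₂) ∧ (∀ l x₂, ∑ a₂ : Bool, Q₂ l x₂ a₂ = 1) ∧
      ∀ x₁ x₂ a₁ a₂,
        P x₁ x₂ x₃' a₁ a₂ a₃' / (∑ l, p l * ∑ b : Bool, P₂₃ l false x₃' b a₃') =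
          ∑ l, p' l * P₁ l x₁ a₁ * Q₂ l x₂ a₂ :=
  tobl_postselection_local_general L P p hp P₁ P₂₃ hP₂₃pos hdir hdecomp x₃' a₃' hmarg
end

section
/- Let S = {|Ψ_m⟩}_{m=1}^{|S|} be a set of orthogonal fully product vectors in H = C^{d_1} ⊗ ... ⊗ C^{d_N} with the local independence property, and let the Bell inequality Σ_m P(a_m|x_m) ≤ 1 be constructed from S by the standard rules. Then for any quantum state ρ and any local projective measurements, Σ_m P(a_m|x_m) ≤ 1; i.e., the Bell operator B = Σ_m P_m is a projection whenever the P_m are mutually orthogonal product projections. -/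
open ComplexOrder

/-- Tensor product over the `N` parties of local matrices. -/
def tensProd {N : ℕ} {d : Fin N → ℕ}
    (M : (i : Fin N) → Matrix (Fin (d i)) (Fin (d i)) ℂ) :
    Matrix ((i : Fin N) → Fin (d i)) ((i : Fin N) → Fin (d i)) ℂ :=
  Matrix.of fun u v => ∏ i, M i (u i) (v i)

/-!
The product projections `Pₘ = ⨂ᵢ Q m i` are self-adjoint idempotents, and for `m ≠ n` the
product `Pₘ Pₙ = ⨂ᵢ Q m i Q n i` vanishes because one tensor factor does. A finite sum of
mutually orthogonal self-adjoint idempotents is again one, so `B = ∑ₘ Pₘ` is a projection and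
so is `1 - B`. For a state `ρ`, `tr(ρ (1 - B)) = tr((1 - B) ρ (1 - B)) ≥ 0`, i.e.
`tr(ρ B) ≤ tr ρ = 1`.
-/

open Matrix

theorem OrthogonalIdempotents.isStarProjection_sum {R ι : Type*} [Semiring R] [StarRing R]
    {e : ι → R} (he : OrthogonalIdempotents e) (hsa : ∀ i, IsSelfAdjoint (e i)) (s : Finset ι) :
    IsStarProjection (∑ i ∈ s, e i) :=
  ⟨he.isIdempotentElem_sum, isSelfAdjoint_sum s fun i _ => hsa i⟩

section Trace

variable {𝕜 n : Type*} [RCLike 𝕜] [Fintype n] {ρ P : Matrix n n 𝕜}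

theorem Matrix.PosSemidef.trace_mul_nonneg_of_isStarProjection (hρ : ρ.PosSemidef)
    (hP : IsStarProjection P) : 0 ≤ (ρ * P).trace := by
  have h : (ρ * P).trace = (Pᴴ * ρ * P).trace := by
    rw [trace_mul_cycle, ← star_eq_conjTranspose, hP.isSelfAdjoint.star_eq,
      hP.isIdempotentElem.eq, trace_mul_comm]
  exact h ▸ (hρ.conjTranspose_mul_mul_same P).trace_nonneg

theorem Matrix.PosSemidef.trace_mul_le_trace_of_isStarProjection [DecidableEq n]
    (hρ : ρ.PosSemidef) (hP : IsStarProjection P) : (ρ * P).trace ≤ ρ.trace := by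
  have h := hρ.trace_mul_nonneg_of_isStarProjection hP.one_sub
  rwa [mul_sub, mul_one, trace_sub, sub_nonneg] at h

end Trace

section TensorProduct

variable {N : ℕ} {d : Fin N → ℕ}

theorem tensProd_mul (M M' : (i : Fin N) → Matrix (Fin (d i)) (Fin (d i)) ℂ) :
    tensProd M * tensProd M' = tensProd fun i => M i * M' i := by
  ext u v
  simp only [mul_apply, tensProd, of_apply]
  rw [Fintype.prod_sum fun i j => M i (u i) j * M' i j (v i)]
  simp [Finset.prod_mul_distrib]

theorem tensProd_conjTranspose (M : (i : Fin N) → Matrix (Fin (d i)) (Fin (d i)) ℂ) :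
    (tensProd M)ᴴ = tensProd fun i => (M i)ᴴ := by
  ext u v
  simp [tensProd, conjTranspose_apply]

theorem tensProd_eq_zero {M : (i : Fin N) → Matrix (Fin (d i)) (Fin (d i)) ℂ} (i : Fin N)
    (h : M i = 0) : tensProd M = 0 := by
  ext u v
  exact Finset.prod_eq_zero (Finset.mem_univ i) (by simp [h])

theorem isHermitian_tensProd {M : (i : Fin N) → Matrix (Fin (d i)) (Fin (d i)) ℂ}
    (hM : ∀ i, (M i).IsHermitian) : (tensProd M).IsHermitian := by
  rw [IsHermitian, tensProd_conjTranspose]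
  exact congrArg tensProd (funext hM)

theorem orthogonalIdempotents_tensProd {ι : Type*}
    {Q : ι → (i : Fin N) → Matrix (Fin (d i)) (Fin (d i)) ℂ}
    (hidem : ∀ m i, IsIdempotentElem (Q m i))
    (horth : Pairwise fun m n => ∃ i, Q m i * Q n i = 0) :
    OrthogonalIdempotents fun m => tensProd (Q m) where
  idem m := by
    rw [IsIdempotentElem, tensProd_mul]
    exact congrArg tensProd (funext (hidem m))
  ortho m n hmn := by
    obtain ⟨i, hi⟩ := horth hmn
    rw [tensProd_mul]
    exact tensProd_eq_zero i hi

end TensorProduct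

/-- For a Bell inequality `∑ₘ P(aₘ|xₘ) ≤ 1` built from a set of orthogonal
product vectors with the local independence property, the probability terms are
represented by mutually orthogonal product projections `Pₘ = ⨂ᵢ Q m i` (for
each pair `m ≠ n` some site has orthogonal local projectors).  Then the Bell
operator `B = ∑ₘ Pₘ` is a projection, and hence for any quantum state `ρ` and
local projective measurements, `∑ₘ P(aₘ|xₘ) = tr(ρ B) ≤ 1`: the inequality is
not violated by quantum correlations. -/
theorem bell_operator_from_orthogonal_product_projections
    (N : ℕ) (d : Fin N → ℕ) (k : ℕ)
    (Q : Fin k → (i : Fin N) → Matrix (Fin (d i)) (Fin (d i)) ℂ)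
    (hherm : ∀ m i, (Q m i).IsHermitian)
    (hidem : ∀ m i, Q m i * Q m i = Q m i)
    (horth : ∀ m n, m ≠ n → ∃ i, Q m i * Q n i = 0) :
    (∑ m, tensProd (Q m)) * (∑ m, tensProd (Q m)) = ∑ m, tensProd (Q m) ∧
    (∑ m, tensProd (Q m)).IsHermitian ∧
    ∀ ρ : Matrix ((i : Fin N) → Fin (d i)) ((i : Fin N) → Fin (d i)) ℂ,
      ρ.PosSemidef → ρ.trace = 1 →
      ∑ m, ((ρ * tensProd (Q m)).trace).re ≤ 1 := by
  have hB : IsStarProjection (∑ m, tensProd (Q m)) :=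
    (orthogonalIdempotents_tensProd hidem horth).isStarProjection_sum
      (fun m => isHermitian_tensProd (hherm m)) _
  refine ⟨hB.isIdempotentElem, hB.isSelfAdjoint, fun ρ hρ htr => ?_⟩
  calc ∑ m, ((ρ * tensProd (Q m)).trace).re = ((ρ * ∑ m, tensProd (Q m)).trace).re := by
        rw [Finset.mul_sum, trace_sum, Complex.re_sum]
    _ ≤ ρ.trace.re := (Complex.le_def.mp (hρ.trace_mul_le_trace_of_isStarProjection hB)).1
    _ = 1 := by rw [htr, Complex.one_re]
end
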